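/- arXiv:math/9902042 — 4 statements merged into one kernel-verified Lean document; each statement's English description precedes it below -/
import Mathlib

section
/- Let n ≥ 1 be an integer. For every ε > 0 there exist constants c > 0 and δ > 0 with the following property: for every a = (a_1,…,a_n) ∈ ℤ^n \ {0}, every s ∈ ℂ with Re(s) ≥ n + ε, and every family (ψ^{(p)})_{p ∈ S(a)} where, for each p ∈ S(a), ψ^{(p)} is a standard additive character of ℚ_p, one has ∏_{p ∈ S(a)} |∫_{ℚ_p^n} max(1,‖x‖_p)^{−s} ψ^{(p)}_a(x) dμ_p(x)| ≤ c·(1 + max_j |a_j|)^δ. -/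
/-!
Each local factor is bounded uniformly in `p`, `a` and the character: since `|ψ| = 1`, the integral
is at most `∫ max(1,‖x‖_p)^{-σ}`, and because `‖x‖_p` only takes the values `p^m` this is at most
`∑_m p^{-mσ} μ(‖x‖ ≤ p^m) ≤ ∑_m p^{m(n-σ)} ≤ (1 - 2^{-ε})⁻¹ =: C`. The primes in `S(a)` all divide
some nonzero `a_j`, so there are `N ≤ log₂ |a_j|` of them, and `C^N ≤ (1 + max |a_j|)^{log₂ C}`.
-/

open MeasureTheory

noncomputable instance (p : ℕ) [Fact p.Prime] : MeasurableSpace ℚ_[p] := borel _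
instance (p : ℕ) [Fact p.Prime] : BorelSpace ℚ_[p] := ⟨rfl⟩
instance (q : Nat.Primes) : Fact q.1.Prime := ⟨q.2⟩

open scoped ENNReal

namespace Padic

variable {p : ℕ} [hp : Fact p.Prime]

theorem exists_nat_lt_norm_sub_div_pow_le (k : ℕ) {x : ℚ_[p]} (hx : ‖x‖ ≤ (p : ℝ) ^ k) :
    ∃ r < p ^ k, ‖x - r / (p : ℚ_[p]) ^ k‖ ≤ 1 := by
  have hpk : (p : ℚ_[p]) ^ k ≠ 0 := pow_ne_zero _ (Nat.cast_ne_zero.2 hp.out.ne_zero)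
  have hz : ‖(p : ℚ_[p]) ^ k * x‖ ≤ 1 := by
    rw [norm_mul, norm_pow, norm_p, inv_pow]
    exact inv_mul_le_one_of_le₀ hx (by positivity)
  set z : ℤ_[p] := ⟨_, hz⟩
  refine ⟨z.appr k, z.appr_lt k, ?_⟩
  have hrem := (PadicInt.norm_le_pow_iff_mem_span_pow _ k).2 (z.appr_spec k)
  rw [PadicInt.norm_def] at hrem
  push_cast at hrem
  calc ‖x - (z.appr k : ℚ_[p]) / (p : ℚ_[p]) ^ k‖
      = ‖((p : ℚ_[p]) ^ k * x - z.appr k) / (p : ℚ_[p]) ^ k‖ := by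
        congr 1; field_simp
    _ ≤ 1 := by
        rw [norm_div, norm_pow, norm_p, inv_pow, div_inv_eq_mul]
        calc _ ≤ (p : ℝ) ^ (-(k : ℤ)) * (p : ℝ) ^ k := by gcongr
          _ = 1 := by rw [zpow_neg, zpow_natCast, inv_mul_cancel₀ (by simp [hp.out.ne_zero])]

theorem exists_max_one_norm_eq_pow {ι : Type*} [Fintype ι] (x : ι → ℚ_[p]) :
    ∃ m : ℕ, max 1 ‖x‖ = (p : ℝ) ^ m := by
  rcases le_or_gt ‖x‖ 1 with hx | hx
  · exact ⟨0, by simp [hx]⟩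
  obtain ⟨i, hi⟩ : ∃ i, ‖x i‖ = ‖x‖ := by
    by_contra! h
    exact ((pi_norm_lt_iff (by linarith)).2 fun i => (norm_le_pi_norm x i).lt_of_ne (h i)).false
  have hxi : x i ≠ 0 := by rintro h; simp [h] at hi; linarith
  have hv : (x i).valuation < 0 := by
    by_contra! hv
    rw [← hi, norm_eq_zpow_neg_valuation hxi] at hx
    exact hx.not_ge (zpow_le_one_of_nonpos₀ (by exact_mod_cast hp.out.one_le) (by omega))
  refine ⟨(-(x i).valuation).toNat, ?_⟩
  rw [max_eq_right hx.le, ← hi, norm_eq_zpow_neg_valuation hxi, ← zpow_natCast,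
    Int.toNat_of_nonneg (by omega)]

theorem measure_closedBall_pow_le {ι : Type*} [Fintype ι] (μ : Measure (ι → ℚ_[p]))
    [μ.IsAddHaarMeasure] (k : ℕ) :
    μ (Metric.closedBall 0 ((p : ℝ) ^ k))
      ≤ (p : ℝ≥0∞) ^ (k * Fintype.card ι) * μ (Metric.closedBall 0 1) := by
  classical
  let center : (ι → Fin (p ^ k)) → ι → ℚ_[p] := fun r i => (r i : ℕ) / (p : ℚ_[p]) ^ k
  have hcover : Metric.closedBall 0 ((p : ℝ) ^ k) ⊆ ⋃ r, Metric.closedBall (center r) 1 := by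
    intro x hx
    rw [mem_closedBall_zero_iff] at hx
    choose r hr hdist using fun i =>
      exists_nat_lt_norm_sub_div_pow_le k ((norm_le_pi_norm x i).trans hx)
    refine Set.mem_iUnion.2 ⟨fun i => ⟨r i, hr i⟩, ?_⟩
    rw [Metric.mem_closedBall, dist_eq_norm]
    exact (pi_norm_le_iff_of_nonneg zero_le_one).2 hdist
  calc μ (Metric.closedBall 0 ((p : ℝ) ^ k))
      ≤ ∑ r, μ (Metric.closedBall (center r) 1) :=
        (measure_mono hcover).trans (measure_iUnion_fintype_le _ _)
    _ = (p : ℝ≥0∞) ^ (k * Fintype.card ι) * μ (Metric.closedBall 0 1) := by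
      simp only [Measure.addHaar_closedBall_center, Finset.sum_const, Finset.card_univ,
        Fintype.card_fun, Fintype.card_fin, nsmul_eq_mul, pow_mul]
      push_cast; rfl

theorem lintegral_max_one_norm_rpow_neg_le {ι : Type*} [Fintype ι] (μ : Measure (ι → ℚ_[p]))
    [μ.IsAddHaarMeasure] (σ : ℝ) :
    ∫⁻ x, ENNReal.ofReal (max 1 ‖x‖ ^ (-σ)) ∂μ
      ≤ μ (Metric.closedBall 0 1) *
        (1 - ENNReal.ofReal ((p : ℝ) ^ (-σ)) * (p : ℝ≥0∞) ^ Fintype.card ι)⁻¹ := by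
  set t := ENNReal.ofReal ((p : ℝ) ^ (-σ))
  set B : ℕ → Set (ι → ℚ_[p]) := fun k => Metric.closedBall 0 ((p : ℝ) ^ k)
  have hpointwise (x : ι → ℚ_[p]) :
      ENNReal.ofReal (max 1 ‖x‖ ^ (-σ)) ≤ ∑' k, (B k).indicator (fun _ => t ^ k) x := by
    obtain ⟨m, hm⟩ := exists_max_one_norm_eq_pow x
    have hxm : x ∈ B m := mem_closedBall_zero_iff.2 (hm ▸ le_max_right _ _)
    calc ENNReal.ofReal (max 1 ‖x‖ ^ (-σ)) = t ^ m := by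
          rw [hm, ← Real.rpow_natCast, ← Real.rpow_mul (by positivity), mul_comm,
            Real.rpow_mul (by positivity), Real.rpow_natCast, ENNReal.ofReal_pow (by positivity)]
      _ = (B m).indicator (fun _ => t ^ m) x := (Set.indicator_of_mem hxm fun _ => t ^ m).symm
      _ ≤ _ := ENNReal.le_tsum m
  calc ∫⁻ x, ENNReal.ofReal (max 1 ‖x‖ ^ (-σ)) ∂μ
      ≤ ∫⁻ x, ∑' k, (B k).indicator (fun _ => t ^ k) x ∂μ := lintegral_mono hpointwise
    _ = ∑' k, t ^ k * μ (B k) := by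
      have hB (k : ℕ) : MeasurableSet (B k) := Metric.isClosed_closedBall.measurableSet
      rw [lintegral_tsum fun k => (measurable_const.indicator (hB k)).aemeasurable]
      exact tsum_congr fun k => lintegral_indicator_const (hB k) _
    _ ≤ ∑' k, (t * (p : ℝ≥0∞) ^ Fintype.card ι) ^ k * μ (Metric.closedBall 0 1) := by
      refine ENNReal.tsum_le_tsum fun k => ?_
      grw [measure_closedBall_pow_le μ k]
      rw [mul_pow, ← pow_mul, mul_comm (Fintype.card ι), mul_assoc]
    _ = _ := by rw [ENNReal.tsum_mul_right, ENNReal.tsum_geometric, mul_comm]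

theorem norm_integral_max_one_norm_cpow_neg_mul_le {ι : Type*} [Fintype ι]
    (μ : Measure (ι → ℚ_[p])) [μ.IsAddHaarMeasure] (hμ : μ (Metric.closedBall 0 1) = 1)
    {ε : ℝ} (hε : 0 < ε) {s : ℂ} (hs : (Fintype.card ι : ℝ) + ε ≤ s.re)
    (Φ : (ι → ℚ_[p]) → ℂ) (hΦ : ∀ x, ‖Φ x‖ ≤ 1) :
    ‖∫ x, ((max 1 ‖x‖ : ℝ) : ℂ) ^ (-s) * Φ x ∂μ‖ ≤ (1 - (2 : ℝ) ^ (-ε))⁻¹ := by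
  set r : ℝ := (2 : ℝ) ^ (-ε)
  have hr1 : r < 1 := Real.rpow_lt_one_of_one_lt_of_neg one_lt_two (neg_lt_zero.2 hε)
  have hp0 : (0 : ℝ) < p := by exact_mod_cast hp.out.pos
  have hratio : ENNReal.ofReal ((p : ℝ) ^ (-s.re)) * (p : ℝ≥0∞) ^ Fintype.card ι
      ≤ ENNReal.ofReal r := by
    rw [← ENNReal.ofReal_natCast, ← ENNReal.ofReal_pow hp0.le,
      ← ENNReal.ofReal_mul (by positivity), ← Real.rpow_natCast,
      ← Real.rpow_add hp0]
    refine ENNReal.ofReal_le_ofReal ?_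
    calc (p : ℝ) ^ (-s.re + Fintype.card ι) ≤ (p : ℝ) ^ (-ε) :=
          Real.rpow_le_rpow_of_exponent_le (by exact_mod_cast hp.out.one_le) (by linarith)
      _ ≤ r := Real.rpow_le_rpow_of_nonpos two_pos (by exact_mod_cast hp.out.two_le) (by linarith)
  have hnorm (x : ι → ℚ_[p]) : ENNReal.ofReal ‖((max 1 ‖x‖ : ℝ) : ℂ) ^ (-s) * Φ x‖
      ≤ ENNReal.ofReal (max 1 ‖x‖ ^ (-s.re)) := by
    rw [norm_mul, Complex.norm_cpow_eq_rpow_re_of_pos (by positivity), Complex.neg_re]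
    exact ENNReal.ofReal_le_ofReal (mul_le_of_le_one_right (by positivity) (hΦ x))
  refine (norm_integral_le_lintegral_norm _).trans
    (ENNReal.toReal_le_of_le_ofReal (inv_nonneg.2 (sub_nonneg.2 hr1.le)) ?_)
  calc ∫⁻ x, ENNReal.ofReal ‖((max 1 ‖x‖ : ℝ) : ℂ) ^ (-s) * Φ x‖ ∂μ
      ≤ ∫⁻ x, ENNReal.ofReal (max 1 ‖x‖ ^ (-s.re)) ∂μ := lintegral_mono hnorm
    _ ≤ μ (Metric.closedBall 0 1) *
        (1 - ENNReal.ofReal ((p : ℝ) ^ (-s.re)) * (p : ℝ≥0∞) ^ Fintype.card ι)⁻¹ :=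
      lintegral_max_one_norm_rpow_neg_le μ s.re
    _ ≤ (1 - ENNReal.ofReal r)⁻¹ := by rw [hμ, one_mul]; gcongr
    _ = ENNReal.ofReal (1 - r)⁻¹ := by
      rw [ENNReal.ofReal_inv_of_pos (sub_pos.2 hr1), ENNReal.ofReal_sub _ (by positivity),
        ENNReal.ofReal_one]

end Padic

theorem Nat.two_pow_card_primeFactors_le {m : ℕ} (hm : m ≠ 0) : 2 ^ m.primeFactors.card ≤ m :=
  (Finset.pow_card_le_prod _ _ _ fun _ hq => (Nat.prime_of_mem_primeFactors hq).two_le).trans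
    (Nat.le_of_dvd (Nat.pos_of_ne_zero hm) m.prod_primeFactors_dvd)

section CommonPrimeDivisors

variable {ι : Type*} (a : ι → ℤ) {j : ι}

theorem exists_injective_primes_dvd_all_to_primeFactors (hj : a j ≠ 0) :
    ∃ f : {q : Nat.Primes // ∀ i, (q.1 : ℤ) ∣ a i} → (a j).natAbs.primeFactors,
      Function.Injective f :=
  ⟨fun q => ⟨q.1.1, Nat.mem_primeFactors.2
      ⟨q.1.2, Int.natCast_dvd.1 (q.2 j), Int.natAbs_ne_zero.2 hj⟩⟩,
    fun _ _ h => Subtype.ext (Subtype.ext (by simpa using congrArg Subtype.val h))⟩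

theorem finite_primes_dvd_all (hj : a j ≠ 0) :
    Finite {q : Nat.Primes // ∀ i, (q.1 : ℤ) ∣ a i} :=
  let ⟨_, hf⟩ := exists_injective_primes_dvd_all_to_primeFactors a hj
  Finite.of_injective _ hf

theorem two_pow_natCard_primes_dvd_all_le (hj : a j ≠ 0) :
    2 ^ Nat.card {q : Nat.Primes // ∀ i, (q.1 : ℤ) ∣ a i} ≤ (a j).natAbs := by
  obtain ⟨f, hf⟩ := exists_injective_primes_dvd_all_to_primeFactors a hj
  calc 2 ^ Nat.card {q : Nat.Primes // ∀ i, (q.1 : ℤ) ∣ a i}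
      ≤ 2 ^ (a j).natAbs.primeFactors.card := by
        gcongr
        · exact one_le_two
        · exact (Nat.card_le_card_of_injective f hf).trans_eq (Nat.card_eq_finsetCard _)
    _ ≤ (a j).natAbs := Nat.two_pow_card_primeFactors_le (Int.natAbs_ne_zero.2 hj)

end CommonPrimeDivisors

theorem finprod_le_pow_natCard {α : Type*} [Finite α] {f : α → ℝ} {C : ℝ}
    (hf₀ : ∀ a, 0 ≤ f a) (hfC : ∀ a, f a ≤ C) : ∏ᶠ a, f a ≤ C ^ Nat.card α := by
  cases nonempty_fintype α
  rw [finprod_eq_prod_of_fintype, Nat.card_eq_fintype_card, ← Finset.card_univ,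
    ← Finset.prod_const]
  exact Finset.prod_le_prod (fun a _ => hf₀ a) fun a _ => hfC a

theorem pow_le_rpow_logb_of_two_pow_le {C B : ℝ} {N : ℕ} (hC : 1 ≤ C) (hN : (2 : ℝ) ^ N ≤ B) :
    C ^ N ≤ B ^ Real.logb 2 C :=
  calc C ^ N = ((2 : ℝ) ^ N) ^ Real.logb 2 C := by
        rw [← Real.rpow_pow_comm zero_le_two, Real.rpow_logb two_pos one_lt_two.ne' (by linarith)]
    _ ≤ B ^ Real.logb 2 C := by
        gcongr
        exact Real.logb_nonneg one_lt_two hC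

theorem stmt2_general (n : ℕ) :
    ∀ ε > (0 : ℝ), ∃ c > (0 : ℝ), ∃ δ > (0 : ℝ),
      ∀ (a : Fin n → ℤ), a ≠ 0 →
      ∀ (s : ℂ), (n : ℝ) + ε ≤ s.re →
      ∀ (μ : (q : Nat.Primes) → Measure (Fin n → ℚ_[q.1])),
        (∀ (q : Nat.Primes), (μ q).IsAddHaarMeasure) →
        (∀ (q : Nat.Primes), μ q {x | ∀ i, ‖x i‖ ≤ 1} = 1) →
      ∀ (ψ : (q : Nat.Primes) → ℚ_[q.1] → ℂ),
        (∀ (q : Nat.Primes), Continuous (ψ q)) →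
        (∀ (q : Nat.Primes), ∀ x y : ℚ_[q.1], ψ q (x + y) = ψ q x * ψ q y) →
        (∀ (q : Nat.Primes), ∀ x : ℚ_[q.1], ‖ψ q x‖ = 1) →
        (∀ (q : Nat.Primes), ∀ x : ℚ_[q.1], ‖x‖ ≤ 1 → ψ q x = 1) →
        (∀ (q : Nat.Primes), ∃ x : ℚ_[q.1], ‖x‖ ≤ (q.1 : ℝ) ∧ ψ q x ≠ 1) →
      (∏ᶠ q : {q : Nat.Primes // ∀ j, (q.1 : ℤ) ∣ a j},
          ‖(∫ x : Fin n → ℚ_[q.1.1],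
            ((max 1 ‖x‖ : ℝ) : ℂ) ^ (-s) * ψ q.1 (∑ i, (a i : ℚ_[q.1.1]) * x i) ∂(μ q.1))‖)
        ≤ c * (1 + ((Finset.univ.sup fun j => (a j).natAbs : ℕ) : ℝ)) ^ δ := by
  intro ε hε
  set C : ℝ := (1 - (2 : ℝ) ^ (-ε))⁻¹
  have hC : 1 < C := one_lt_inv₀ (sub_pos.2 (Real.rpow_lt_one_of_one_lt_of_neg one_lt_two
    (neg_lt_zero.2 hε))) |>.2 (sub_lt_self _ (by positivity))
  refine ⟨1, one_pos, Real.logb 2 C, Real.logb_pos one_lt_two hC, ?_⟩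
  intro a ha s hs μ hμ hμ₁ ψ _ _ hψ _ _
  obtain ⟨j, hj⟩ : ∃ j, a j ≠ 0 := Function.ne_iff.1 ha
  have := finite_primes_dvd_all a hj
  have hball (q : Nat.Primes) : μ q (Metric.closedBall 0 1) = 1 := by
    rw [← hμ₁ q]
    congr 1
    ext x
    simp [pi_norm_le_iff_of_nonneg]
  have hfactor (q : Nat.Primes) (Φ : (Fin n → ℚ_[q]) → ℂ) (hΦ : ∀ x, ‖Φ x‖ ≤ 1) :
      ‖∫ x, ((max 1 ‖x‖ : ℝ) : ℂ) ^ (-s) * Φ x ∂μ q‖ ≤ C := by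
    have := hμ q
    exact Padic.norm_integral_max_one_norm_cpow_neg_mul_le (μ q) (hball q) hε
      (by simpa using hs) Φ hΦ
  rw [one_mul]
  refine (finprod_le_pow_natCard (C := C) (fun _ => norm_nonneg _) fun q => ?_).trans ?_
  · exact hfactor q.1 _ fun x => (hψ _ _).le
  · refine pow_le_rpow_logb_of_two_pow_le hC.le ?_
    have hM : (a j).natAbs ≤ Finset.univ.sup fun j => (a j).natAbs :=
      Finset.le_sup (f := fun j => (a j).natAbs) (Finset.mem_univ j)
    exact_mod_cast
      ((two_pow_natCard_primes_dvd_all_le a hj).trans hM).trans (Nat.le_add_left _ 1)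

/-- For every `ε > 0` there are `c, δ > 0` such that for every
nonzero `a ∈ ℤ^n`, every `s` with `Re s ≥ n + ε`, and every family of standard
additive characters `ψ^(p)` (and normalized Haar measures `μ_p`) indexed by the
primes, the product over the primes `p ∈ S(a)` dividing all coordinates of `a` of
`|∫ max(1,‖x‖_p)^(-s) ψ^(p)(a·x) dμ_p|` is at most `c (1 + max_j |a_j|)^δ`. -/
theorem stmt2 (n : ℕ) (hn : 1 ≤ n) :
    ∀ ε > (0 : ℝ), ∃ c > (0 : ℝ), ∃ δ > (0 : ℝ),
      ∀ (a : Fin n → ℤ), a ≠ 0 →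
      ∀ (s : ℂ), (n : ℝ) + ε ≤ s.re →
      ∀ (μ : (q : Nat.Primes) → Measure (Fin n → ℚ_[q.1])),
        (∀ (q : Nat.Primes), (μ q).IsAddHaarMeasure) →
        (∀ (q : Nat.Primes), μ q {x | ∀ i, ‖x i‖ ≤ 1} = 1) →
      ∀ (ψ : (q : Nat.Primes) → ℚ_[q.1] → ℂ),
        (∀ (q : Nat.Primes), Continuous (ψ q)) →
        (∀ (q : Nat.Primes), ∀ x y : ℚ_[q.1], ψ q (x + y) = ψ q x * ψ q y) →
        (∀ (q : Nat.Primes), ∀ x : ℚ_[q.1], ‖ψ q x‖ = 1) →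
        (∀ (q : Nat.Primes), ∀ x : ℚ_[q.1], ‖x‖ ≤ 1 → ψ q x = 1) →
        (∀ (q : Nat.Primes), ∃ x : ℚ_[q.1], ‖x‖ ≤ (q.1 : ℝ) ∧ ψ q x ≠ 1) →
      (∏ᶠ q : {q : Nat.Primes // ∀ j, (q.1 : ℤ) ∣ a j},
          ‖(∫ x : Fin n → ℚ_[q.1.1],
            ((max 1 ‖x‖ : ℝ) : ℂ) ^ (-s) * ψ q.1 (∑ i, (a i : ℚ_[q.1.1]) * x i) ∂(μ q.1))‖)
        ≤ c * (1 + ((Finset.univ.sup fun j => (a j).natAbs : ℕ) : ℝ)) ^ δ :=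
  stmt2_general n
end

section
/- Let p be a prime and ℓ(x_1,x_2) = a x_1 + b x_2 a linear form with integer coefficients satisfying gcd(a,b) = 1. For every integer α ≥ 1, the set {x ∈ ℚ_p² : ‖x‖_p = p^α and |ℓ(x)|_p ≤ 1} has Haar measure p^{α−1}(p−1). -/
open MeasureTheory

/-!
Since `gcd(a, b) = 1`, one coefficient, say `a`, is a `p`-adic unit (otherwise swap the
coordinates). On the strip `|a x₁ + b x₂| ≤ 1` the coordinate `x₁` is then determined by `x₂` up to
`ℤ_p`, so `‖x‖ = |x₂|` once `‖x‖ > 1`. Splitting `|x₂| ≤ p ^ n` into the `p ^ n` cosets of `ℤ_p`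
cuts the part of the strip above it into `p ^ n` translates of `ℤ_p²`, so it has measure `p ^ n`,
and the shell `‖x‖ = p ^ α` of the strip has measure `p ^ α - p ^ (α - 1)`.
-/

open Metric

namespace Padic

variable {p : ℕ} [Fact p.Prime]

theorem norm_div_p_pow (y : ℚ_[p]) (n : ℕ) : ‖y / (p : ℚ_[p]) ^ n‖ = ‖y‖ * (p : ℝ) ^ n := by
  rw [norm_div, norm_pow, norm_p, inv_pow, div_inv_eq_mul]

theorem closedBall_zero_pow_eq_biUnion (n : ℕ) :
    closedBall (0 : ℚ_[p]) ((p : ℝ) ^ n) =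
      ⋃ k ∈ Finset.range (p ^ n), closedBall ((k : ℚ_[p]) / (p : ℚ_[p]) ^ n) 1 := by
  have hp : (0 : ℝ) < (p : ℝ) ^ n := by have := (Fact.out : p.Prime).pos; positivity
  have hpn : (p : ℚ_[p]) ^ n ≠ 0 :=
    pow_ne_zero _ (Nat.cast_ne_zero.2 (Fact.out : p.Prime).ne_zero)
  ext x
  simp only [mem_closedBall, sub_zero, Set.mem_iUnion, Finset.mem_range,
    exists_prop, dist_eq_norm]
  constructor
  · intro hx
    have hz : ‖(p : ℚ_[p]) ^ n * x‖ ≤ 1 := by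
      rw [norm_mul, norm_pow, norm_p, inv_pow, inv_mul_le_iff₀ hp, mul_one]
      exact hx
    set z : ℤ_[p] := ⟨_, hz⟩
    refine ⟨z.appr n, z.appr_lt n, ?_⟩
    have happr : ‖(z : ℚ_[p]) - z.appr n‖ ≤ ((p : ℝ) ^ n)⁻¹ := by
      simpa [PadicInt.norm_def] using
        (z - z.appr n).norm_le_pow_iff_mem_span_pow n |>.2 (z.appr_spec n)
    have hsplit : x - (z.appr n : ℚ_[p]) / (p : ℚ_[p]) ^ n =
        ((z : ℚ_[p]) - z.appr n) / (p : ℚ_[p]) ^ n := by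
      change _ = ((p : ℚ_[p]) ^ n * x - _) / _
      field_simp
    rwa [hsplit, norm_div_p_pow, ← le_div_iff₀ hp, one_div]
  · rintro ⟨k, -, hk⟩
    calc ‖x‖ = ‖(x - k / (p : ℚ_[p]) ^ n) + k / (p : ℚ_[p]) ^ n‖ := by rw [sub_add_cancel]
      _ ≤ max ‖x - k / (p : ℚ_[p]) ^ n‖ ‖(k : ℚ_[p]) / (p : ℚ_[p]) ^ n‖ :=
        IsUltrametricDist.norm_add_le_max _ _
      _ ≤ (p : ℝ) ^ n := by
        have hp1 : (1 : ℝ) ≤ p := by exact_mod_cast (Fact.out : p.Prime).one_le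
        refine max_le (hk.trans (one_le_pow₀ hp1)) ?_
        rw [norm_div_p_pow]
        exact mul_le_of_le_one_left hp.le (by exact_mod_cast norm_int_le_one k)

theorem pairwiseDisjoint_closedBall_natCast_div_pow (n : ℕ) :
    (Finset.range (p ^ n) : Set ℕ).PairwiseDisjoint
      fun k ↦ closedBall ((k : ℚ_[p]) / (p : ℚ_[p]) ^ n) 1 := by
  have hp : (0 : ℝ) < (p : ℝ) ^ n := by have := (Fact.out : p.Prime).pos; positivity
  intro k hk k' hk' hne
  refine Set.disjoint_left.2 fun x hx hx' ↦ hne ?_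
  have hdist : ‖(((k : ℤ) - k' : ℤ) : ℚ_[p]) / (p : ℚ_[p]) ^ n‖ ≤ 1 := by
    have := IsUltrametricDist.dist_triangle_max ((k : ℚ_[p]) / p ^ n) x ((k' : ℚ_[p]) / p ^ n)
    rw [dist_eq_norm, ← sub_div] at this
    push_cast
    exact this.trans (max_le (by rwa [dist_comm]) hx')
  rw [norm_div_p_pow, ← le_div_iff₀ hp, one_div, ← zpow_natCast, ← zpow_neg,
    norm_int_le_pow_iff_dvd, ← Nat.cast_pow, ← Nat.modEq_iff_dvd] at hdist
  simp only [Finset.coe_range, Set.mem_Iio] at hk hk'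
  exact (hdist.eq_of_lt_of_lt hk' hk).symm

theorem norm_eq_pow_succ_iff (x : ℚ_[p]) (n : ℕ) :
    ‖x‖ = (p : ℝ) ^ (n + 1) ↔ ‖x‖ ≤ (p : ℝ) ^ (n + 1) ∧ (p : ℝ) ^ n < ‖x‖ := by
  have hp : (1 : ℝ) < p := by exact_mod_cast (Fact.out : p.Prime).one_lt
  constructor
  · intro h
    exact ⟨h.le, h ▸ pow_lt_pow_right₀ hp n.lt_succ_self⟩
  · rintro ⟨hle, hlt⟩
    refine hle.antisymm (not_lt.1 fun h ↦ hlt.not_ge ?_)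
    have := (norm_le_pow_iff_norm_lt_pow_add_one x n).2 (by exact_mod_cast h)
    exact_mod_cast this

theorem norm_intCast_eq_one_or_of_gcd_eq_one {a b : ℤ} (hab : Int.gcd a b = 1) :
    ‖(a : ℚ_[p])‖ = 1 ∨ ‖(b : ℚ_[p])‖ = 1 := by
  by_contra! h
  have hpa := norm_intCast_lt_one_iff.1 ((norm_int_le_one a).lt_of_ne h.1)
  have hpb := norm_intCast_lt_one_iff.1 ((norm_int_le_one b).lt_of_ne h.2)
  have hp1 : (p : ℤ) ∣ ((1 : ℕ) : ℤ) := hab ▸ Int.dvd_coe_gcd hpa hpb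
  exact (Fact.out : p.Prime).not_dvd_one (Int.natCast_dvd_natCast.1 hp1)

end Padic

section LinearForm

variable {K : Type*} [NormedField K] {a b : K}

theorem norm_fst_le_max_one_norm_snd [IsUltrametricDist K] (ha : ‖a‖ = 1) (hb : ‖b‖ ≤ 1)
    {x : K × K} (h : ‖a * x.1 + b * x.2‖ ≤ 1) : ‖x.1‖ ≤ max 1 ‖x.2‖ :=
  calc ‖x.1‖ = ‖(a * x.1 + b * x.2) + -(b * x.2)‖ := by
        rw [add_neg_cancel_right, norm_mul, ha, one_mul]
    _ ≤ max ‖a * x.1 + b * x.2‖ ‖-(b * x.2)‖ := IsUltrametricDist.norm_add_le_max _ _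
    _ ≤ max 1 ‖x.2‖ := by
        rw [norm_neg, norm_mul]
        exact max_le_max h (mul_le_of_le_one_left (norm_nonneg _) hb)

theorem setOf_norm_linear_le_one_and_norm_snd_le_one [IsUltrametricDist K] (ha : ‖a‖ = 1)
    (hb : ‖b‖ ≤ 1) :
    {x : K × K | ‖a * x.1 + b * x.2‖ ≤ 1 ∧ ‖x.2‖ ≤ 1} = {x | ‖x.1‖ ≤ 1 ∧ ‖x.2‖ ≤ 1} := by
  ext x
  constructor
  · rintro ⟨h, h2⟩
    exact ⟨(norm_fst_le_max_one_norm_snd ha hb h).trans (max_le le_rfl h2), h2⟩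
  · rintro ⟨h1, h2⟩
    refine ⟨(IsUltrametricDist.norm_add_le_max _ _).trans (max_le ?_ ?_), h2⟩ <;>
      rw [norm_mul]
    · rwa [ha, one_mul]
    · exact mul_le_one₀ hb (norm_nonneg _) h2

theorem max_norm_eq_iff_norm_snd_eq [IsUltrametricDist K] (ha : ‖a‖ = 1) (hb : ‖b‖ ≤ 1)
    {r : ℝ} (hr : 1 < r) {x : K × K} (h : ‖a * x.1 + b * x.2‖ ≤ 1) :
    max ‖x.1‖ ‖x.2‖ = r ↔ ‖x.2‖ = r := by
  have hx1 := norm_fst_le_max_one_norm_snd ha hb h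
  constructor
  · intro hmax
    by_contra hne
    have hx2 : ‖x.2‖ < r := (hmax ▸ le_max_right _ _).lt_of_ne hne
    exact (max_lt (hx1.trans_lt (max_lt hr hx2)) hx2).ne hmax
  · intro hx2
    rw [hx2] at hx1 ⊢
    exact max_eq_right (hx1.trans (max_le hr.le le_rfl))

theorem measure_setOf_norm_linear_le_one_and_norm_snd_sub_le_one [MeasurableSpace K]
    [MeasurableAdd (K × K)] (μ : Measure (K × K)) [μ.IsAddLeftInvariant] (ha : a ≠ 0) (c : K) :
    μ {x | ‖a * x.1 + b * x.2‖ ≤ 1 ∧ ‖x.2 - c‖ ≤ 1} =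
      μ {x | ‖a * x.1 + b * x.2‖ ≤ 1 ∧ ‖x.2‖ ≤ 1} := by
  -- `(b * c / a, -c)` lies in the kernel of the linear form and shifts `x.2` by `-c`.
  rw [← measure_preimage_add μ (b * c / a, -c) {x | ‖a * x.1 + b * x.2‖ ≤ 1 ∧ ‖x.2‖ ≤ 1}]
  congr 1
  ext x
  simp only [Set.mem_ofPred_eq, Set.mem_preimage, Prod.fst_add, Prod.snd_add]
  have hlin : a * (b * c / a + x.1) + b * (-c + x.2) = a * x.1 + b * x.2 := by
    field_simp
    ring
  rw [hlin, neg_add_eq_sub]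

end LinearForm

section PadicPlane

variable {p : ℕ} [Fact p.Prime] (μ : Measure (ℚ_[p] × ℚ_[p])) [μ.IsAddLeftInvariant]
  {a b : ℚ_[p]}

theorem measure_setOf_norm_linear_le_one_and_norm_snd_le_pow
    (hμ1 : μ {x | ‖x.1‖ ≤ 1 ∧ ‖x.2‖ ≤ 1} = 1) (ha : ‖a‖ = 1) (hb : ‖b‖ ≤ 1) (n : ℕ) :
    μ {x | ‖a * x.1 + b * x.2‖ ≤ 1 ∧ ‖x.2‖ ≤ (p : ℝ) ^ n} = (p ^ n : ℕ) := by
  set cell : ℕ → Set (ℚ_[p] × ℚ_[p]) := fun k ↦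
    {x | ‖a * x.1 + b * x.2‖ ≤ 1 ∧ ‖x.2 - (k : ℚ_[p]) / (p : ℚ_[p]) ^ n‖ ≤ 1}
  have hunion : {x | ‖a * x.1 + b * x.2‖ ≤ 1 ∧ ‖x.2‖ ≤ (p : ℝ) ^ n} =
      ⋃ k ∈ Finset.range (p ^ n), cell k := by
    ext x
    have hball := Set.ext_iff.1 (Padic.closedBall_zero_pow_eq_biUnion (p := p) n) x.2
    simp only [mem_closedBall, dist_eq_norm, sub_zero, Set.mem_iUnion, exists_prop] at hball
    simp only [cell, Set.mem_ofPred_eq, Set.mem_iUnion, exists_prop, hball]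
    tauto
  have hdisj : (Finset.range (p ^ n) : Set ℕ).PairwiseDisjoint cell := by
    intro k hk k' hk' hne
    refine Set.disjoint_left.2 fun x hx hx' ↦ ?_
    refine Set.disjoint_left.1 (Padic.pairwiseDisjoint_closedBall_natCast_div_pow n hk hk' hne)
      ?_ (?_ : x.2 ∈ _)
    · rw [mem_closedBall, dist_eq_norm]; exact hx.2
    · rw [mem_closedBall, dist_eq_norm]; exact hx'.2
  have ha0 : a ≠ 0 := norm_ne_zero_iff.1 (ha ▸ one_ne_zero)
  have hcell : ∀ k, μ (cell k) = 1 := fun k ↦ by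
    rw [measure_setOf_norm_linear_le_one_and_norm_snd_sub_le_one μ ha0,
      setOf_norm_linear_le_one_and_norm_snd_le_one ha hb, hμ1]
  rw [hunion, measure_biUnion_finset hdisj fun k _ ↦ by measurability]
  simp [hcell]

theorem measure_setOf_max_norm_eq_pow_and_norm_linear_le_one_of_norm_left
    (hμ1 : μ {x | ‖x.1‖ ≤ 1 ∧ ‖x.2‖ ≤ 1} = 1) (ha : ‖a‖ = 1) (hb : ‖b‖ ≤ 1) {n : ℕ}
    (hn : 1 ≤ n) :
    μ {x | max ‖x.1‖ ‖x.2‖ = (p : ℝ) ^ n ∧ ‖a * x.1 + b * x.2‖ ≤ 1} =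
      ENNReal.ofReal ((p : ℝ) ^ (n - 1) * (p - 1)) := by
  obtain ⟨m, rfl⟩ : ∃ m, n = m + 1 := ⟨n - 1, by omega⟩
  have hp : (1 : ℝ) < p := by exact_mod_cast (Fact.out : p.Prime).one_lt
  set T : ℕ → Set (ℚ_[p] × ℚ_[p]) := fun k ↦
    {x | ‖a * x.1 + b * x.2‖ ≤ 1 ∧ ‖x.2‖ ≤ (p : ℝ) ^ k}
  have hshell : {x : ℚ_[p] × ℚ_[p] | max ‖x.1‖ ‖x.2‖ = (p : ℝ) ^ (m + 1) ∧
      ‖a * x.1 + b * x.2‖ ≤ 1} = T (m + 1) \ T m := by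
    ext x
    simp only [T, Set.mem_ofPred_eq, Set.mem_sdiff, not_and, not_le]
    by_cases h : ‖a * x.1 + b * x.2‖ ≤ 1
    · rw [max_norm_eq_iff_norm_snd_eq ha hb (one_lt_pow₀ hp m.succ_ne_zero) h,
        Padic.norm_eq_pow_succ_iff]
      tauto
    · tauto
  have hmono : T m ⊆ T (m + 1) := fun x hx ↦
    ⟨hx.1, hx.2.trans (pow_le_pow_right₀ hp.le m.le_succ)⟩
  have hTm : MeasurableSet (T m) := by measurability
  rw [hshell, measure_sdiff hmono hTm.nullMeasurableSet (by simp [T,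
      measure_setOf_norm_linear_le_one_and_norm_snd_le_pow μ hμ1 ha hb]),
    measure_setOf_norm_linear_le_one_and_norm_snd_le_pow μ hμ1 ha hb,
    measure_setOf_norm_linear_le_one_and_norm_snd_le_pow μ hμ1 ha hb,
    ← ENNReal.natCast_sub, ← ENNReal.ofReal_natCast]
  congr 1
  rw [Nat.cast_sub (Nat.pow_le_pow_right (Fact.out : p.Prime).pos (m.le_add_right 1))]
  push_cast
  ring

theorem measure_setOf_max_norm_eq_pow_and_norm_linear_le_one_of_norm_right
    (hμ1 : μ {x | ‖x.1‖ ≤ 1 ∧ ‖x.2‖ ≤ 1} = 1) (ha : ‖a‖ ≤ 1) (hb : ‖b‖ = 1) {n : ℕ}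
    (hn : 1 ≤ n) :
    μ {x | max ‖x.1‖ ‖x.2‖ = (p : ℝ) ^ n ∧ ‖a * x.1 + b * x.2‖ ≤ 1} =
      ENNReal.ofReal ((p : ℝ) ^ (n - 1) * (p - 1)) := by
  have : (μ.map MeasurableEquiv.prodComm).IsAddLeftInvariant :=
    isAddLeftInvariant_map
      (AddEquiv.prodComm (M := ℚ_[p]) (N := ℚ_[p])).toAddMonoidHom.toAddHom
      MeasurableEquiv.prodComm.measurable AddEquiv.prodComm.surjective
  have hswap := measure_setOf_max_norm_eq_pow_and_norm_linear_le_one_of_norm_left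
    (μ.map MeasurableEquiv.prodComm) ?_ hb ha hn
  · rw [MeasurableEquiv.map_apply] at hswap
    convert hswap using 2
    ext x
    simp [MeasurableEquiv.prodComm, max_comm, add_comm]
  · rw [MeasurableEquiv.map_apply]
    convert hμ1 using 2
    ext x
    simp [MeasurableEquiv.prodComm, and_comm]

end PadicPlane

/-- Let `p` be a prime, `ℓ(x₁,x₂) = a x₁ + b x₂` a primitive integral
linear form. For every integer `α ≥ 1`, the set
`{x ∈ ℚ_p² : ‖x‖_p = p^α, |ℓ(x)|_p ≤ 1}` has normalized Haar measure `p^(α-1)(p-1)`. -/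
theorem stmt8 (p : ℕ) [Fact p.Prime]
    (μ : Measure (ℚ_[p] × ℚ_[p])) (hμ : μ.IsAddHaarMeasure)
    (hμ1 : μ {x | ‖x.1‖ ≤ 1 ∧ ‖x.2‖ ≤ 1} = 1)
    (a b : ℤ) (hab : Int.gcd a b = 1)
    (α : ℕ) (hα : 1 ≤ α) :
    μ {x : ℚ_[p] × ℚ_[p] | max ‖x.1‖ ‖x.2‖ = (p : ℝ) ^ α ∧
        ‖(a : ℚ_[p]) * x.1 + (b : ℚ_[p]) * x.2‖ ≤ 1} =
      ENNReal.ofReal ((p : ℝ) ^ (α - 1) * (p - 1)) := by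
  rcases Padic.norm_intCast_eq_one_or_of_gcd_eq_one (p := p) hab with ha | hb
  · exact measure_setOf_max_norm_eq_pow_and_norm_linear_le_one_of_norm_left μ hμ1 ha
      (Padic.norm_int_le_one b) hα
  · exact measure_setOf_max_norm_eq_pow_and_norm_linear_le_one_of_norm_right μ hμ1
      (Padic.norm_int_le_one a) hb hα
end

section
/- With the linear forms ℓ_1,…,ℓ_r, the set S, and the sets U_k(α,β), U_k(α), U(α) as in the context, let p ∉ S be a prime, ψ a standard additive character of ℚ_p, and a = (a_1,a_2) ∈ ℤ² such that p does not divide a_k a_2 − b_k a_1 for any 1 ≤ k ≤ r. Then: (i) ∫_{U_k(α,β)} ψ_a dμ = 0 for all 1 ≤ k ≤ r and α > β ≥ 1; (ii) ∫_{U_k(α)} ψ_a dμ = −1 if α = 1 and = 0 if α ≥ 2; (iii) ∫_{U(α)} ψ_a dμ = r − 1 if α = 1 and = 0 if α ≥ 2. -/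
/-!
Translating by `t` multiplies `x ↦ ψ(c₁x₁ + c₂x₂)` by `ψ(c·t)`, so its integral over a
`t`-invariant set vanishes as soon as `ψ(c·t) ≠ 1`. Take `t = (-b_k, a_k)/p`: it lies in
`ker ℓ_k`, has norm `≤ p`, and `c·t = (a_k c₂ - b_k c₁)/p` has norm exactly `p`, where `ψ ≠ 1`
since `ψ` is trivial on `ℤ_p` but not on `p⁻¹ℤ_p`. By the ultrametric inequality, for `α ≥ 2`
this translation preserves `U_k(α,β)`, `U_k(α)` and `U(α)`.

For `α = 1`, the `t`-invariant set `{‖x‖ ≤ p, |ℓ_k x| ≤ 1}` is the disjoint union of `U_k(1)`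
and `ℤ_p²`, on which the integrand is `1`; so `∫_{U_k(1)} = -1`. Likewise the annulus
`1 < ‖x‖ ≤ p` has integral `-1`, and it is the disjoint union of `U(1)` and the `U_k(1)`, which
are pairwise disjoint because `p ∤ det(ℓ_j, ℓ_k)`. Hence `∫_{U(1)} = r - 1`.
-/

open MeasureTheory

/-- `U_k(α,β) = {x ∈ ℚ_p² : ‖x‖_p = p^α, |a x₁ + b x₂|_p = p^(α-β)}`. -/
def Uab (p : ℕ) [Fact p.Prime] (a b : ℤ) (α β : ℕ) : Set (ℚ_[p] × ℚ_[p]) :=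
  {x | max ‖x.1‖ ‖x.2‖ = (p : ℝ) ^ α ∧
    ‖(a : ℚ_[p]) * x.1 + (b : ℚ_[p]) * x.2‖ = (p : ℝ) ^ (α - β)}

/-- `U_k(α) = {x ∈ ℚ_p² : ‖x‖_p = p^α, |a x₁ + b x₂|_p ≤ 1}`. -/
def Ua (p : ℕ) [Fact p.Prime] (a b : ℤ) (α : ℕ) : Set (ℚ_[p] × ℚ_[p]) :=
  {x | max ‖x.1‖ ‖x.2‖ = (p : ℝ) ^ α ∧ ‖(a : ℚ_[p]) * x.1 + (b : ℚ_[p]) * x.2‖ ≤ 1}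

/-- `U(α) = {x ∈ ℚ_p² : ‖x‖_p = p^α, |ℓ_j(x)|_p = p^α for all j}`. -/
def Utot (p : ℕ) [Fact p.Prime] {r : ℕ} (a b : Fin r → ℤ) (α : ℕ) :
    Set (ℚ_[p] × ℚ_[p]) :=
  {x | max ‖x.1‖ ‖x.2‖ = (p : ℝ) ^ α ∧
    ∀ j, ‖(a j : ℚ_[p]) * x.1 + (b j : ℚ_[p]) * x.2‖ = (p : ℝ) ^ α}

open Metric

instance Prod.isUltrametricDist {X Y : Type*} [PseudoMetricSpace X] [PseudoMetricSpace Y]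
    [IsUltrametricDist X] [IsUltrametricDist Y] : IsUltrametricDist (X × Y) where
  dist_triangle_max x y z := by
    simp only [Prod.dist_eq]
    exact max_le
      ((dist_triangle_max _ y.1 _).trans (max_le_max (le_max_left _ _) (le_max_left _ _)))
      ((dist_triangle_max _ y.2 _).trans (max_le_max (le_max_right _ _) (le_max_right _ _)))

namespace IsUltrametricDist

variable {E : Type*} [SeminormedAddCommGroup E] [IsUltrametricDist E] {x t : E} {R : ℝ}

lemma norm_add_eq_of_norm_lt (h : ‖t‖ < ‖x‖) : ‖x + t‖ = ‖x‖ := by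
  rw [norm_add_eq_max_of_norm_ne_norm h.ne', max_eq_left h.le]

lemma norm_add_eq_iff_of_norm_lt (ht : ‖t‖ < R) : ‖x + t‖ = R ↔ ‖x‖ = R := by
  refine ⟨fun h => ?_, fun h => (norm_add_eq_of_norm_lt (h ▸ ht)).trans h⟩
  rw [← add_neg_cancel_right x t, norm_add_eq_of_norm_lt (by rwa [norm_neg, h]), h]

lemma norm_add_le_iff_of_norm_le (ht : ‖t‖ ≤ R) : ‖x + t‖ ≤ R ↔ ‖x‖ ≤ R := by
  refine ⟨fun h => ?_, fun h => (norm_add_le_max x t).trans (max_le h ht)⟩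
  rw [← add_neg_cancel_right x t]
  exact (norm_add_le_max _ _).trans (max_le h (by rwa [norm_neg]))

end IsUltrametricDist

theorem setIntegral_eq_zero_of_add_right_invariant {G 𝕜 : Type*} [MeasurableSpace G] [AddGroup G]
    [MeasurableAdd G] [RCLike 𝕜] {μ : Measure G} [μ.IsAddRightInvariant] {f : G → 𝕜}
    {U : Set G} (hU : MeasurableSet U) {t : G} (hUt : ∀ x, x + t ∈ U ↔ x ∈ U) {w : 𝕜}
    (hw : w ≠ 1) (hf : ∀ x, f (x + t) = w * f x) :
    ∫ x in U, f x ∂μ = 0 := by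
  have hshift : ∀ x, U.indicator f (x + t) = w * U.indicator f x := by
    intro x
    by_cases hx : x ∈ U
    · rw [Set.indicator_of_mem ((hUt x).2 hx), Set.indicator_of_mem hx, hf]
    · rw [Set.indicator_of_notMem (mt (hUt x).1 hx), Set.indicator_of_notMem hx, mul_zero]
  have hfix : ∫ x in U, f x ∂μ = w * ∫ x in U, f x ∂μ :=
    calc ∫ x in U, f x ∂μ = ∫ x, U.indicator f (x + t) ∂μ := by
          rw [integral_add_right_eq_self, integral_indicator hU]
      _ = ∫ x, w * U.indicator f x ∂μ := by simp_rw [hshift]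
      _ = w * ∫ x in U, f x ∂μ := by rw [integral_const_mul, integral_indicator hU]
  have : (1 - w) * ∫ x in U, f x ∂μ = 0 := by linear_combination hfix
  exact (mul_eq_zero.1 this).resolve_left (sub_ne_zero.2 hw.symm)

section PadicPlane

variable {p : ℕ} [Fact p.Prime]

namespace Padic

lemma norm_le_one_of_norm_lt_p {v : ℚ_[p]} (h : ‖v‖ < p) : ‖v‖ ≤ 1 := by
  simpa using (norm_le_pow_iff_norm_lt_pow_add_one v 0).2 (by simpa using h)

lemma norm_intCast_eq_one_of_not_dvd {z : ℤ} (h : ¬ (p : ℤ) ∣ z) : ‖(z : ℚ_[p])‖ = 1 :=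
  le_antisymm (norm_int_le_one z) (not_lt.1 (mt norm_intCast_lt_one_iff.1 h))

lemma norm_eq_p_iff {v : ℚ_[p]} : ‖v‖ = p ↔ ‖v‖ ≤ p ∧ 1 < ‖v‖ :=
  ⟨fun h => ⟨h.le, h ▸ Nat.one_lt_cast.2 (Fact.out : p.Prime).one_lt⟩,
    fun h => le_antisymm h.1 (not_lt.1 fun hlt => (norm_le_one_of_norm_lt_p hlt).not_gt h.2)⟩

end Padic

lemma Prod.norm_eq_p_iff {x : ℚ_[p] × ℚ_[p]} : ‖x‖ = p ↔ ‖x‖ ≤ p ∧ 1 < ‖x‖ := by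
  rcases max_choice ‖x.1‖ ‖x.2‖ with h | h <;>
    rw [Prod.norm_def, h, Padic.norm_eq_p_iff]

lemma AddChar.apply_ne_one_of_norm_eq_p {M : Type*} [Monoid M] (ψ : AddChar ℚ_[p] M)
    (htriv : ∀ x, ‖x‖ ≤ 1 → ψ x = 1) (hnontriv : ∃ x, ‖x‖ ≤ p ∧ ψ x ≠ 1)
    {u : ℚ_[p]} (hu : ‖u‖ = p) : ψ u ≠ 1 := by
  intro hψu
  obtain ⟨x, hx, hψx⟩ := hnontriv
  have hp : (0 : ℝ) < p := Nat.cast_pos.2 (Fact.out : p.Prime).pos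
  have hu0 : u ≠ 0 := norm_pos_iff.1 (hu ▸ hp)
  -- `x / u ∈ ℤ_p` is `p`-adically close to a natural number `n`, so `x ≡ n • u` modulo `ℤ_p`.
  obtain ⟨n, hn⟩ := PadicInt.denseRange_natCast.exists_dist_lt
    (⟨x / u, by rw [norm_div, hu]; exact div_le_one_of_le₀ hx hp.le⟩ : ℤ_[p]) one_pos
  have hrest : ‖x - n • u‖ ≤ 1 := by
    refine Padic.norm_le_one_of_norm_lt_p ?_
    have hn' : ‖x / u - n‖ < 1 := hn
    rw [show x - n • u = (x / u - n) * u by rw [nsmul_eq_mul]; field_simp, norm_mul, hu]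
    simpa using mul_lt_mul_of_pos_right hn' hp
  exact hψx <| by
    rw [← add_sub_cancel (n • u) x, AddChar.map_add_eq_mul, AddChar.map_nsmul_eq_pow, hψu,
      one_pow, htriv _ hrest, one_mul]

variable (p) in
noncomputable def linForm (a b : ℤ) : ℚ_[p] × ℚ_[p] →+ ℚ_[p] :=
  AddMonoidHom.mk' (fun x => a * x.1 + b * x.2) fun x y => by
    simp only [Prod.fst_add, Prod.snd_add]; ring

@[simp] lemma linForm_apply (a b : ℤ) (x : ℚ_[p] × ℚ_[p]) :
    linForm p a b x = a * x.1 + b * x.2 := rfl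

lemma norm_linForm_le (a b : ℤ) (x : ℚ_[p] × ℚ_[p]) : ‖linForm p a b x‖ ≤ ‖x‖ := by
  have hterm : ∀ (z : ℤ) (v : ℚ_[p]), ‖(z : ℚ_[p]) * v‖ ≤ ‖v‖ := fun z v => by
    simpa [norm_mul] using mul_le_of_le_one_left (norm_nonneg v) (Padic.norm_int_le_one z)
  rw [Prod.norm_def]
  exact (IsUltrametricDist.norm_add_le_max _ _).trans (max_le_max (hterm a x.1) (hterm b x.2))

-- Cramer's rule: `Δ • x` is an integral linear image of `(ℓ₁ x, ℓ₂ x)`, and `Δ` is a `p`-adic unit.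
lemma norm_le_max_norm_linForm {a b c d : ℤ} (hΔ : ¬ (p : ℤ) ∣ a * d - c * b)
    (x : ℚ_[p] × ℚ_[p]) : ‖x‖ ≤ max ‖linForm p a b x‖ ‖linForm p c d x‖ := by
  set y : ℚ_[p] × ℚ_[p] := (linForm p a b x, linForm p c d x)
  have hΔx : ∀ v : ℚ_[p], ‖v‖ = ‖((a * d - c * b : ℤ) : ℚ_[p]) * v‖ := fun v => by
    rw [norm_mul, Padic.norm_intCast_eq_one_of_not_dvd hΔ, one_mul]
  rw [Prod.norm_def, hΔx x.1, hΔx x.2]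
  refine max_le (le_of_eq_of_le ?_ (norm_linForm_le d (-b) y))
    (le_of_eq_of_le ?_ (norm_linForm_le (-c) a y)) <;>
  · congr 1
    simp only [y, linForm_apply]
    push_cast
    ring

variable (p) in
noncomputable def kerVec (a b : ℤ) : ℚ_[p] × ℚ_[p] := ((p : ℚ_[p])⁻¹ * -b, (p : ℚ_[p])⁻¹ * a)

lemma linForm_kerVec (a b c d : ℤ) :
    linForm p c d (kerVec p a b) = (p : ℚ_[p])⁻¹ * (a * d - b * c : ℤ) := by
  simp only [linForm_apply, kerVec]; push_cast; ring

lemma linForm_kerVec_self (a b : ℤ) : linForm p a b (kerVec p a b) = 0 := by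
  rw [linForm_kerVec, mul_comm a b, sub_self, Int.cast_zero, mul_zero]

lemma norm_kerVec_le (a b : ℤ) : ‖kerVec p a b‖ ≤ p := by
  have hp : ‖(p : ℚ_[p])⁻¹‖ = p := by rw [norm_inv, Padic.norm_p, inv_inv]
  rw [Prod.norm_def]
  simp only [kerVec, norm_mul, norm_neg, hp]
  exact max_le (mul_le_of_le_one_right (Nat.cast_nonneg p) (Padic.norm_int_le_one b))
    (mul_le_of_le_one_right (Nat.cast_nonneg p) (Padic.norm_int_le_one a))

lemma norm_linForm_kerVec {a b c d : ℤ} (h : ¬ (p : ℤ) ∣ a * d - b * c) :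
    ‖linForm p c d (kerVec p a b)‖ = p := by
  rw [linForm_kerVec, norm_mul, norm_inv, Padic.norm_p, inv_inv,
    Padic.norm_intCast_eq_one_of_not_dvd h, mul_one]

lemma mem_Uab_iff {a b : ℤ} {α β : ℕ} {x : ℚ_[p] × ℚ_[p]} :
    x ∈ Uab p a b α β ↔ ‖x‖ = (p : ℝ) ^ α ∧ ‖linForm p a b x‖ = (p : ℝ) ^ (α - β) := Iff.rfl

lemma mem_Ua_iff {a b : ℤ} {α : ℕ} {x : ℚ_[p] × ℚ_[p]} :
    x ∈ Ua p a b α ↔ ‖x‖ = (p : ℝ) ^ α ∧ ‖linForm p a b x‖ ≤ 1 := Iff.rfl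

lemma mem_Utot_iff {r : ℕ} {a b : Fin r → ℤ} {α : ℕ} {x : ℚ_[p] × ℚ_[p]} :
    x ∈ Utot p a b α ↔ ‖x‖ = (p : ℝ) ^ α ∧ ∀ j, ‖linForm p (a j) (b j) x‖ = (p : ℝ) ^ α :=
  Iff.rfl

lemma measurableSet_Uab (a b : ℤ) (α β : ℕ) : MeasurableSet (Uab p a b α β) := by
  rw [Uab, Set.ofPred_and]
  exact ((isClosed_eq (by fun_prop) continuous_const).inter
    (isClosed_eq (by fun_prop) continuous_const)).measurableSet

lemma measurableSet_Ua (a b : ℤ) (α : ℕ) : MeasurableSet (Ua p a b α) := by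
  rw [Ua, Set.ofPred_and]
  exact ((isClosed_eq (by fun_prop) continuous_const).inter
    (isClosed_le (by fun_prop) continuous_const)).measurableSet

lemma measurableSet_Utot {r : ℕ} (a b : Fin r → ℤ) (α : ℕ) : MeasurableSet (Utot p a b α) := by
  rw [Utot, Set.ofPred_and, Set.ofPred_forall]
  exact ((isClosed_eq (by fun_prop) continuous_const).inter
    (isClosed_iInter fun j => isClosed_eq (by fun_prop) continuous_const)).measurableSet

section Translation

variable {a b : ℤ} {α : ℕ} {t x : ℚ_[p] × ℚ_[p]}

lemma add_mem_Uab_iff {β : ℕ} (hℓ : linForm p a b t = 0) (ht : ‖t‖ < (p : ℝ) ^ α) :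
    x + t ∈ Uab p a b α β ↔ x ∈ Uab p a b α β := by
  simp only [mem_Uab_iff, map_add, hℓ, add_zero, IsUltrametricDist.norm_add_eq_iff_of_norm_lt ht]

lemma add_mem_Ua_iff (hℓ : linForm p a b t = 0) (ht : ‖t‖ < (p : ℝ) ^ α) :
    x + t ∈ Ua p a b α ↔ x ∈ Ua p a b α := by
  simp only [mem_Ua_iff, map_add, hℓ, add_zero, IsUltrametricDist.norm_add_eq_iff_of_norm_lt ht]

lemma add_mem_Utot_iff {r : ℕ} {a b : Fin r → ℤ} (ht : ‖t‖ < (p : ℝ) ^ α) :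
    x + t ∈ Utot p a b α ↔ x ∈ Utot p a b α := by
  simp only [mem_Utot_iff, map_add, IsUltrametricDist.norm_add_eq_iff_of_norm_lt ht,
    IsUltrametricDist.norm_add_eq_iff_of_norm_lt ((norm_linForm_le _ _ t).trans_lt ht)]

end Translation

lemma continuous_linForm (a b : ℤ) : Continuous (linForm p a b) :=
  show Continuous fun x : ℚ_[p] × ℚ_[p] => (a : ℚ_[p]) * x.1 + (b : ℚ_[p]) * x.2 by fun_prop

lemma norm_kerVec_lt_pow (a b : ℤ) {α : ℕ} (hα : 2 ≤ α) : ‖kerVec p a b‖ < (p : ℝ) ^ α :=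
  (norm_kerVec_le a b).trans_lt <| by
    simpa using pow_lt_pow_right₀ (Nat.one_lt_cast.2 (Fact.out : p.Prime).one_lt) hα

structure AddChar.IsStandard (ψ : AddChar ℚ_[p] ℂ) : Prop where
  continuous : Continuous ψ
  map_eq_one : ∀ x, ‖x‖ ≤ 1 → ψ x = 1
  exists_ne_one : ∃ x, ‖x‖ ≤ p ∧ ψ x ≠ 1

section CharacterIntegrals

variable (μ : Measure (ℚ_[p] × ℚ_[p])) {ψ : AddChar ℚ_[p] ℂ}

lemma setIntegral_closedBall_one (hψ : ψ.IsStandard)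
    (hμ1 : μ (closedBall 0 1) = 1) (c d : ℤ) :
    ∫ x in closedBall (0 : ℚ_[p] × ℚ_[p]) 1, ψ (linForm p c d x) ∂μ = 1 := by
  rw [setIntegral_congr_fun measurableSet_closedBall (g := fun _ => 1) fun x hx =>
      hψ.map_eq_one _ ((norm_linForm_le c d x).trans (mem_closedBall_zero_iff.1 hx)),
    setIntegral_const, measureReal_def, hμ1]
  simp

variable [μ.IsAddHaarMeasure]

theorem setIntegral_eq_zero_of_add_kerVec_mem_iff (hψ : ψ.IsStandard) {a b c d : ℤ} (hgen : ¬ (p : ℤ) ∣ a * d - b * c) {U : Set (ℚ_[p] × ℚ_[p])}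
    (hU : MeasurableSet U) (hUt : ∀ x, x + kerVec p a b ∈ U ↔ x ∈ U) :
    ∫ x in U, ψ (linForm p c d x) ∂μ = 0 :=
  setIntegral_eq_zero_of_add_right_invariant hU hUt
    (ψ.apply_ne_one_of_norm_eq_p hψ.map_eq_one hψ.exists_ne_one (norm_linForm_kerVec hgen))
    fun x => by rw [map_add, AddChar.map_add_eq_mul, mul_comm]

theorem setIntegral_Uab_eq_zero (hψ : ψ.IsStandard) {a b c d : ℤ} (hgen : ¬ (p : ℤ) ∣ a * d - b * c)
    {α : ℕ} (hα : 2 ≤ α) (β : ℕ) :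
    ∫ x in Uab p a b α β, ψ (linForm p c d x) ∂μ = 0 :=
  setIntegral_eq_zero_of_add_kerVec_mem_iff μ hψ hgen (measurableSet_Uab a b α β)
    fun _ => add_mem_Uab_iff (linForm_kerVec_self a b) (norm_kerVec_lt_pow a b hα)

theorem setIntegral_Ua_eq_zero (hψ : ψ.IsStandard) {a b c d : ℤ} (hgen : ¬ (p : ℤ) ∣ a * d - b * c)
    {α : ℕ} (hα : 2 ≤ α) :
    ∫ x in Ua p a b α, ψ (linForm p c d x) ∂μ = 0 :=
  setIntegral_eq_zero_of_add_kerVec_mem_iff μ hψ hgen (measurableSet_Ua a b α)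
    fun _ => add_mem_Ua_iff (linForm_kerVec_self a b) (norm_kerVec_lt_pow a b hα)

theorem setIntegral_Utot_eq_zero (hψ : ψ.IsStandard) {a₀ b₀ c d : ℤ} (hgen : ¬ (p : ℤ) ∣ a₀ * d - b₀ * c)
    {r : ℕ} (a b : Fin r → ℤ) {α : ℕ} (hα : 2 ≤ α) :
    ∫ x in Utot p a b α, ψ (linForm p c d x) ∂μ = 0 :=
  setIntegral_eq_zero_of_add_kerVec_mem_iff μ hψ hgen (measurableSet_Utot a b α)
    fun _ => add_mem_Utot_iff (norm_kerVec_lt_pow a₀ b₀ hα)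

lemma integrableOn_closedBall (hψ : ψ.IsStandard) (c d : ℤ) (R : ℝ) :
    IntegrableOn (fun x => ψ (linForm p c d x)) (closedBall 0 R) μ :=
  (hψ.continuous.comp (continuous_linForm c d)).continuousOn.integrableOn_compact (isCompact_closedBall 0 R)

theorem setIntegral_sdiff_closedBall_one (hψ : ψ.IsStandard) (hμ1 : μ (closedBall 0 1) = 1) {a b c d : ℤ} (hgen : ¬ (p : ℤ) ∣ a * d - b * c)
    {V : Set (ℚ_[p] × ℚ_[p])} (hV : MeasurableSet V) (hV1 : closedBall 0 1 ⊆ V)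
    (hVp : V ⊆ closedBall 0 p) (hVt : ∀ x, x + kerVec p a b ∈ V ↔ x ∈ V) :
    ∫ x in V \ closedBall 0 1, ψ (linForm p c d x) ∂μ = -1 := by
  rw [setIntegral_sdiff measurableSet_closedBall
      ((integrableOn_closedBall μ hψ c d p).mono_set hVp) hV1,
    setIntegral_eq_zero_of_add_kerVec_mem_iff μ hψ hgen hV hVt,
    setIntegral_closedBall_one μ hψ hμ1]
  ring

lemma Ua_one_eq_sdiff (a b : ℤ) :
    Ua p a b 1 = {x | ‖x‖ ≤ p ∧ ‖linForm p a b x‖ ≤ 1} \ closedBall 0 1 := by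
  ext x
  simp only [mem_Ua_iff, pow_one, Set.mem_sdiff, Set.mem_ofPred_eq, mem_closedBall_zero_iff,
    not_le, Prod.norm_eq_p_iff]
  tauto

theorem setIntegral_Ua_one (hψ : ψ.IsStandard) (hμ1 : μ (closedBall 0 1) = 1) {a b c d : ℤ} (hgen : ¬ (p : ℤ) ∣ a * d - b * c) :
    ∫ x in Ua p a b 1, ψ (linForm p c d x) ∂μ = -1 := by
  have hp : (1 : ℝ) ≤ p := Nat.one_le_cast.2 (Fact.out : p.Prime).one_le
  rw [Ua_one_eq_sdiff]
  refine setIntegral_sdiff_closedBall_one μ hψ hμ1 hgen ?_ ?_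
    (fun x hx => mem_closedBall_zero_iff.2 hx.1) fun x => ?_
  · rw [Set.ofPred_and]
    exact ((isClosed_le (by fun_prop) continuous_const).inter
      (isClosed_le ((continuous_linForm a b).norm) continuous_const)).measurableSet
  · intro x hx
    have hx1 := mem_closedBall_zero_iff.1 hx
    exact ⟨hx1.trans hp, (norm_linForm_le a b x).trans hx1⟩
  · simp only [Set.mem_ofPred_eq, map_add, linForm_kerVec_self, add_zero,
      IsUltrametricDist.norm_add_le_iff_of_norm_le (norm_kerVec_le a b)]


lemma closedBall_sdiff_eq_iUnion_Ua_union_Utot {r : ℕ} (a b : Fin r → ℤ) :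
    closedBall (0 : ℚ_[p] × ℚ_[p]) p \ closedBall 0 1 =
      (⋃ k, Ua p (a k) (b k) 1) ∪ Utot p a b 1 := by
  ext x
  simp only [Set.mem_sdiff, mem_closedBall_zero_iff, not_le, ← Prod.norm_eq_p_iff,
    Set.mem_union, Set.mem_iUnion, mem_Ua_iff, mem_Utot_iff, pow_one]
  refine ⟨fun hx => ?_, by rintro (⟨_, hx, _⟩ | ⟨hx, _⟩) <;> exact hx⟩
  by_cases h : ∃ k, ‖linForm p (a k) (b k) x‖ ≤ 1
  · obtain ⟨k, hk⟩ := h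
    exact Or.inl ⟨k, hx, hk⟩
  · push Not at h
    exact Or.inr ⟨hx, fun j => Padic.norm_eq_p_iff.2 ⟨(norm_linForm_le _ _ x).trans hx.le, h j⟩⟩

lemma pairwise_disjoint_Ua_one {r : ℕ} {a b : Fin r → ℤ}
    (hS : ∀ j k, j ≠ k → ¬ (p : ℤ) ∣ a j * b k - a k * b j) :
    Pairwise (Function.onFun Disjoint fun k => Ua p (a k) (b k) 1) := by
  intro j k hjk
  refine Set.disjoint_left.2 fun x hj hk => ?_
  rw [mem_Ua_iff, pow_one] at hj hk
  have := (norm_le_max_norm_linForm (hS j k hjk) x).trans (max_le hj.2 hk.2)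
  exact (Prod.norm_eq_p_iff.1 hj.1).2.not_ge this

lemma disjoint_iUnion_Ua_one_Utot {r : ℕ} (a b : Fin r → ℤ) :
    Disjoint (⋃ k, Ua p (a k) (b k) 1) (Utot p a b 1) := by
  refine Set.disjoint_left.2 fun x hx ht => ?_
  obtain ⟨k, hk⟩ := Set.mem_iUnion.1 hx
  have := (mem_Ua_iff.1 hk).2
  rw [(mem_Utot_iff.1 ht).2 k, pow_one] at this
  exact (Nat.one_lt_cast.2 (Fact.out : p.Prime).one_lt).not_ge this

theorem setIntegral_Utot_one (hψ : ψ.IsStandard) (hμ1 : μ (closedBall 0 1) = 1) {r : ℕ} (hr : 1 ≤ r) {a b : Fin r → ℤ}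
    (hS : ∀ j k, j ≠ k → ¬ (p : ℤ) ∣ a j * b k - a k * b j) {c d : ℤ}
    (hgen : ∀ k, ¬ (p : ℤ) ∣ a k * d - b k * c) :
    ∫ x in Utot p a b 1, ψ (linForm p c d x) ∂μ = r - 1 := by
  have hint : ∀ s ⊆ closedBall 0 p, IntegrableOn (fun x => ψ (linForm p c d x)) s μ :=
    fun s hs => (integrableOn_closedBall μ hψ c d p).mono_set hs
  have hUa_sub : ∀ k, Ua p (a k) (b k) 1 ⊆ closedBall 0 p := fun k x hx =>
    mem_closedBall_zero_iff.2 (by rw [(mem_Ua_iff.1 hx).1, pow_one])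
  have hUtot_sub : Utot p a b 1 ⊆ closedBall 0 p := fun x hx =>
    mem_closedBall_zero_iff.2 (by rw [(mem_Utot_iff.1 hx).1, pow_one])
  have hannulus := setIntegral_sdiff_closedBall_one μ hψ hμ1 (hgen ⟨0, hr⟩)
    measurableSet_closedBall (closedBall_subset_closedBall (Nat.one_le_cast.2
      (Fact.out : p.Prime).one_le)) subset_rfl fun x => by
      simp only [mem_closedBall_zero_iff,
        IsUltrametricDist.norm_add_le_iff_of_norm_le (norm_kerVec_le _ _)]
  rw [closedBall_sdiff_eq_iUnion_Ua_union_Utot a b,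
    setIntegral_union (disjoint_iUnion_Ua_one_Utot a b) (measurableSet_Utot a b 1)
      (hint _ (Set.iUnion_subset hUa_sub)) (hint _ hUtot_sub),
    integral_iUnion_fintype (fun k => measurableSet_Ua _ _ 1) (pairwise_disjoint_Ua_one hS)
      (fun k => hint _ (hUa_sub k))] at hannulus
  simp only [setIntegral_Ua_one μ hψ hμ1 (hgen _), Finset.sum_const,
    Finset.card_univ, Fintype.card_fin, nsmul_eq_mul, mul_neg, mul_one] at hannulus
  linear_combination hannulus

end CharacterIntegrals

end PadicPlane

theorem stmt10_general (r : ℕ) (hr : 1 ≤ r) (a b : Fin r → ℤ)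
    (p : ℕ) [Fact p.Prime]
    (hpS : ∀ j k, j ≠ k → ¬ ((p : ℤ) ∣ (a j * b k - a k * b j)))
    (μ : Measure (ℚ_[p] × ℚ_[p])) (hμ : μ.IsAddHaarMeasure)
    (hμ1 : μ {x | ‖x.1‖ ≤ 1 ∧ ‖x.2‖ ≤ 1} = 1)
    (ψ : ℚ_[p] → ℂ) (hψcont : Continuous ψ)
    (hψadd : ∀ x y : ℚ_[p], ψ (x + y) = ψ x * ψ y)
    (hψtriv : ∀ x : ℚ_[p], ‖x‖ ≤ 1 → ψ x = 1)
    (hψnontriv : ∃ x : ℚ_[p], ‖x‖ ≤ (p : ℝ) ∧ ψ x ≠ 1)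
    (c : ℤ × ℤ) (hgen : ∀ k, ¬ ((p : ℤ) ∣ (a k * c.2 - b k * c.1))) :
    (∀ k, ∀ α β : ℕ, 1 ≤ β → β < α →
      ∫ x in Uab p (a k) (b k) α β,
        ψ ((c.1 : ℚ_[p]) * x.1 + (c.2 : ℚ_[p]) * x.2) ∂μ = 0) ∧
    (∀ k,
      (∫ x in Ua p (a k) (b k) 1,
        ψ ((c.1 : ℚ_[p]) * x.1 + (c.2 : ℚ_[p]) * x.2) ∂μ = -1) ∧
      (∀ α : ℕ, 2 ≤ α →
        ∫ x in Ua p (a k) (b k) α,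
          ψ ((c.1 : ℚ_[p]) * x.1 + (c.2 : ℚ_[p]) * x.2) ∂μ = 0)) ∧
    ((∫ x in Utot p a b 1,
        ψ ((c.1 : ℚ_[p]) * x.1 + (c.2 : ℚ_[p]) * x.2) ∂μ = (r : ℂ) - 1) ∧
     (∀ α : ℕ, 2 ≤ α →
        ∫ x in Utot p a b α,
          ψ ((c.1 : ℚ_[p]) * x.1 + (c.2 : ℚ_[p]) * x.2) ∂μ = 0)) := by
  have := hμ
  let χ : AddChar ℚ_[p] ℂ := ⟨ψ, hψtriv 0 (by simp), hψadd⟩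
  have hχ : χ.IsStandard := ⟨hψcont, hψtriv, hψnontriv⟩
  have hball : μ (closedBall 0 1) = 1 := by
    rw [← hμ1]
    congr 1
    ext x
    simp [Prod.norm_def]
  refine ⟨fun k α β _ hβα => ?_, fun k => ⟨?_, fun α hα => ?_⟩, ?_, fun α hα => ?_⟩
  · exact setIntegral_Uab_eq_zero μ hχ (hgen k) (by omega) β
  · exact setIntegral_Ua_one μ hχ hball (hgen k)
  · exact setIntegral_Ua_eq_zero μ hχ (hgen k) hα
  · exact setIntegral_Utot_one μ hχ hball hr hpS hgen
  · exact setIntegral_Utot_eq_zero μ hχ (hgen ⟨0, hr⟩) a b hα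

/-- Integrals of a generic character over the pieces `U_k(α,β)`,
`U_k(α)`, `U(α)` at a prime `p` of good reduction. -/
theorem stmt10 (r : ℕ) (hr : 1 ≤ r) (a b : Fin r → ℤ)
    (hprim : ∀ k, Int.gcd (a k) (b k) = 1)
    (hnonprop : ∀ j k, j ≠ k → a j * b k - a k * b j ≠ 0)
    (p : ℕ) [Fact p.Prime]
    (hpS : ∀ j k, j ≠ k → ¬ ((p : ℤ) ∣ (a j * b k - a k * b j)))
    (μ : Measure (ℚ_[p] × ℚ_[p])) (hμ : μ.IsAddHaarMeasure)
    (hμ1 : μ {x | ‖x.1‖ ≤ 1 ∧ ‖x.2‖ ≤ 1} = 1)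
    (ψ : ℚ_[p] → ℂ) (hψcont : Continuous ψ)
    (hψadd : ∀ x y : ℚ_[p], ψ (x + y) = ψ x * ψ y)
    (hψabs : ∀ x : ℚ_[p], ‖ψ x‖ = 1)
    (hψtriv : ∀ x : ℚ_[p], ‖x‖ ≤ 1 → ψ x = 1)
    (hψnontriv : ∃ x : ℚ_[p], ‖x‖ ≤ (p : ℝ) ∧ ψ x ≠ 1)
    (c : ℤ × ℤ) (hgen : ∀ k, ¬ ((p : ℤ) ∣ (a k * c.2 - b k * c.1))) :
    (∀ k, ∀ α β : ℕ, 1 ≤ β → β < α →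
      ∫ x in Uab p (a k) (b k) α β,
        ψ ((c.1 : ℚ_[p]) * x.1 + (c.2 : ℚ_[p]) * x.2) ∂μ = 0) ∧
    (∀ k,
      (∫ x in Ua p (a k) (b k) 1,
        ψ ((c.1 : ℚ_[p]) * x.1 + (c.2 : ℚ_[p]) * x.2) ∂μ = -1) ∧
      (∀ α : ℕ, 2 ≤ α →
        ∫ x in Ua p (a k) (b k) α,
          ψ ((c.1 : ℚ_[p]) * x.1 + (c.2 : ℚ_[p]) * x.2) ∂μ = 0)) ∧
    ((∫ x in Utot p a b 1,
        ψ ((c.1 : ℚ_[p]) * x.1 + (c.2 : ℚ_[p]) * x.2) ∂μ = (r : ℂ) - 1) ∧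
     (∀ α : ℕ, 2 ≤ α →
        ∫ x in Utot p a b α,
          ψ ((c.1 : ℚ_[p]) * x.1 + (c.2 : ℚ_[p]) * x.2) ∂μ = 0)) :=
  stmt10_general r hr a b p hpS μ hμ hμ1 ψ hψcont hψadd hψtriv hψnontriv c hgen
end

section
/- With the linear forms ℓ_1,…,ℓ_r, the set S, and the sets U_k(α,β), U_k(α) as in the context, let p ∉ S be a prime, ψ a standard additive character of ℚ_p, fix 1 ≤ k ≤ r, and let a = (a_1,a_2) ∈ ℤ² \ {0} be proportional to (a_k,b_k) (i.e. a_1 b_k = a_2 a_k) with p not dividing gcd(a_1,a_2). Then: (i) for integers α > β ≥ 1, ∫_{U_k(α,β)} ψ_a dμ = −p^{α−1}(p−1) if β = α−1 and = 0 otherwise; (ii) for every integer α ≥ 1, ∫_{U_k(α)} ψ_a dμ = p^{α−1}(p−1). -/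
open MeasureTheory

/-!
Since `gcd(a, b) = 1`, an integral unimodular substitution `x = M y` turns `a x₁ + b x₂`
into `y₁`. It preserves the sup norm, hence the normalized Haar measure on `ℚ_p²`, and
`c = t (a, b)` with `t` a `p`-adic unit, so each integral factors as the volume of the sphere
`‖y₂‖ = p^α` times the integral of the standard character `y ↦ ψ (t y)` over a sphere or over
`ℤ_p`. A standard character integrates to `0` over every ball `‖y‖ ≤ p^n` with `n ≥ 1`
(translate by a point of norm `≤ p` where it is nontrivial) and to `1` over `ℤ_p`, and a sphere
is the difference of two balls. The sphere of radius `p^α` has volume `p^α - p^(α-1)` because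
the ball of radius `p^(n+1)` is the disjoint union of `p` translates of the ball of radius `p^n`.
-/

open Metric Set

theorem MeasureTheory.setIntegral_eq_zero_of_preimage_add_eq {G : Type*} [AddGroup G]
    [MeasurableSpace G] [MeasurableAdd G] {ν : Measure G} [ν.IsAddLeftInvariant] {f : G → ℂ}
    (hf : ∀ x y, f (x + y) = f x * f y) {s : Set G} {g : G} (hs : (g + ·) ⁻¹' s = s)
    (hg : f g ≠ 1) : ∫ x in s, f x ∂ν = 0 := by
  have h : ∫ x in s, f x ∂ν = f g * ∫ x in s, f x ∂ν := calc
    ∫ x in s, f x ∂ν = ∫ x in (g + ·) ⁻¹' s, f (g + x) ∂ν :=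
      ((measurePreserving_add_left ν g).setIntegral_preimage_emb
        (measurableEmbedding_addLeft g) f s).symm
    _ = f g * ∫ x in s, f x ∂ν := by simp_rw [hs, hf]; exact integral_const_mul _ _
  have : (1 - f g) * ∫ x in s, f x ∂ν = 0 := by linear_combination h
  exact (mul_eq_zero.1 this).resolve_left (sub_ne_zero.2 hg.symm)

section Haar

variable {G : Type*} [AddGroup G] [TopologicalSpace G] [IsTopologicalAddGroup G]
  [MeasurableSpace G] [BorelSpace G] [SecondCountableTopology G] [LocallyCompactSpace G]

theorem MeasureTheory.Measure.eq_of_isAddHaarMeasure_of_apply_eq (μ ν : Measure G)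
    [μ.IsAddHaarMeasure] [ν.IsAddHaarMeasure] (K : TopologicalSpace.PositiveCompacts G)
    (h : μ K = ν K) : μ = ν := by
  rw [Measure.addHaarMeasure_unique μ K, Measure.addHaarMeasure_unique ν K, h]

theorem ContinuousAddEquiv.measurePreserving_of_preimage_eq (μ : Measure G)
    [μ.IsAddHaarMeasure] (e : G ≃ₜ+ G) (K : TopologicalSpace.PositiveCompacts G)
    (hK : e ⁻¹' K = K) : MeasurePreserving e μ μ := by
  have := e.isAddHaarMeasure_map μ
  refine ⟨e.toHomeomorph.measurable, Measure.eq_of_isAddHaarMeasure_of_apply_eq _ _ K ?_⟩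
  exact (e.toHomeomorph.toMeasurableEquiv.map_apply K).trans (congrArg μ hK)

end Haar

def TopologicalSpace.PositiveCompacts.closedUnitBall (E : Type*) [SeminormedAddCommGroup E]
    [ProperSpace E] : TopologicalSpace.PositiveCompacts E where
  carrier := closedBall 0 1
  isCompact' := isCompact_closedBall 0 1
  interior_nonempty' := ⟨0, ball_subset_interior_closedBall (mem_ball_self one_pos)⟩

section BezoutEquiv

variable {R : Type*} {a b u v : ℤ}

section Ring

variable [CommRing R] [TopologicalSpace R] [IsTopologicalRing R]

def bezoutEquiv (h : u * a + v * b = 1) : (R × R) ≃ₜ+ (R × R) where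
  toFun y := (u * y.1 + (-b : ℤ) * y.2, v * y.1 + a * y.2)
  invFun x := (a * x.1 + b * x.2, (-v : ℤ) * x.1 + u * x.2)
  left_inv y := by
    have h' : (u : R) * a + v * b = 1 := by simpa using congrArg (Int.cast : ℤ → R) h
    ext <;> push_cast
    exacts [by linear_combination y.1 * h', by linear_combination y.2 * h']
  right_inv x := by
    have h' : (u : R) * a + v * b = 1 := by simpa using congrArg (Int.cast : ℤ → R) h
    ext <;> push_cast
    exacts [by linear_combination x.1 * h', by linear_combination x.2 * h']
  map_add' y z := by ext <;> simp only [Prod.fst_add, Prod.snd_add] <;> ring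
  continuous_toFun := by fun_prop
  continuous_invFun := by fun_prop

theorem bezoutEquiv_linearForm (h : u * a + v * b = 1) (y : R × R) :
    a * (bezoutEquiv h y).1 + b * (bezoutEquiv h y).2 = y.1 := by
  have h' : (u : R) * a + v * b = 1 := by simpa using congrArg (Int.cast : ℤ → R) h
  change (a : R) * (u * y.1 + (-b : ℤ) * y.2) + b * (v * y.1 + a * y.2) = y.1
  push_cast
  linear_combination y.1 * h'

end Ring

section Ultrametric

variable [NormedCommRing R] [NormOneClass R] [IsUltrametricDist R]

theorem norm_intCast_mul_add_intCast_mul_le (m n : ℤ) (x : R × R) :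
    ‖(m : R) * x.1 + n * x.2‖ ≤ ‖x‖ := by
  have hmul : ∀ (k : ℤ) (z : R), ‖(k : R) * z‖ ≤ ‖z‖ := fun k z =>
    norm_mul_le_of_le (IsUltrametricDist.norm_intCast_le_one R k) le_rfl |>.trans_eq (one_mul _)
  rw [Prod.norm_def]
  exact (IsUltrametricDist.norm_add_le_max _ _).trans (max_le_max (hmul m _) (hmul n _))

theorem norm_bezoutEquiv (h : u * a + v * b = 1) (y : R × R) : ‖bezoutEquiv h y‖ = ‖y‖ := by
  have hle : ∀ y : R × R, ‖bezoutEquiv h y‖ ≤ ‖y‖ := fun y => by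
    rw [Prod.norm_def]
    exact max_le (norm_intCast_mul_add_intCast_mul_le u (-b) y)
      (norm_intCast_mul_add_intCast_mul_le v a y)
  have hle' : ∀ x : R × R, ‖(bezoutEquiv h).symm x‖ ≤ ‖x‖ := fun x => by
    rw [Prod.norm_def]
    exact max_le (norm_intCast_mul_add_intCast_mul_le a b x)
      (norm_intCast_mul_add_intCast_mul_le (-v) u x)
  exact le_antisymm (hle y) (by simpa using hle' (bezoutEquiv h y))

theorem preimage_bezoutEquiv_setOf (h : u * a + v * b = 1) {r : ℝ} {S : Set R}
    (hS : S ⊆ ball 0 r) :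
    bezoutEquiv h ⁻¹' {x : R × R | ‖x‖ = r ∧ (a : R) * x.1 + b * x.2 ∈ S} =
      S ×ˢ sphere 0 r := by
  ext y
  simp only [mem_preimage, mem_ofPred_eq, norm_bezoutEquiv, bezoutEquiv_linearForm, mem_prod,
    mem_sphere_zero_iff_norm]
  rw [Prod.norm_def]
  refine ⟨fun ⟨hmax, hy⟩ => ⟨hy, ?_⟩, fun ⟨hy, hy₂⟩ => ⟨?_, hy⟩⟩
  · have hy₁ : ‖y.1‖ < r := mem_ball_zero_iff.1 (hS hy)
    rcases max_choice ‖y.1‖ ‖y.2‖ with hm | hm <;> rw [hm] at hmax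
    · exact absurd hmax hy₁.ne
    · exact hmax
  · rw [hy₂, max_eq_right (mem_ball_zero_iff.1 (hS hy)).le]

end Ultrametric

end BezoutEquiv

namespace Padic

variable {p : ℕ} [Fact p.Prime]

variable (p) in
noncomputable def haar : Measure ℚ_[p] :=
  Measure.addHaarMeasure (TopologicalSpace.PositiveCompacts.closedUnitBall ℚ_[p])

instance : (haar p).IsAddHaarMeasure := Measure.isAddHaarMeasure_addHaarMeasure _

theorem haar_closedBall_one : haar p (closedBall 0 1) = 1 := Measure.addHaarMeasure_self

theorem haar_real_closedBall_one : (haar p).real (closedBall 0 1) = 1 := by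
  rw [measureReal_def, haar_closedBall_one, ENNReal.toReal_one]

theorem one_lt_p : (1 : ℝ) < p := by exact_mod_cast (Fact.out : p.Prime).one_lt

theorem norm_le_pow_iff_norm_lt_pow_succ (x : ℚ_[p]) (n : ℕ) :
    ‖x‖ ≤ (p : ℝ) ^ n ↔ ‖x‖ < (p : ℝ) ^ (n + 1) := by
  exact_mod_cast norm_le_pow_iff_norm_lt_pow_add_one x n

theorem sphere_pow_succ_eq_diff (n : ℕ) :
    sphere (0 : ℚ_[p]) ((p : ℝ) ^ (n + 1)) =
      closedBall 0 ((p : ℝ) ^ (n + 1)) \ closedBall 0 ((p : ℝ) ^ n) := by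
  ext x
  simp only [mem_sphere_zero_iff_norm, mem_sdiff, mem_closedBall_zero_iff,
    norm_le_pow_iff_norm_lt_pow_succ x n, not_lt]
  exact ⟨fun h => ⟨h.le, h.ge⟩, fun h => le_antisymm h.1 h.2⟩

theorem norm_p_pow_inv (n : ℕ) : ‖(p : ℚ_[p]) ^ n‖ = ((p : ℝ) ^ n)⁻¹ := by
  rw [norm_p_pow, zpow_neg, zpow_natCast]

theorem exists_norm_sub_natCast_lt_one {z : ℚ_[p]} (hz : ‖z‖ ≤ 1) :
    ∃ j < p, ‖z - j‖ < 1 := by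
  obtain ⟨j, hj, hmem⟩ := PadicInt.exists_mem_range (⟨z, hz⟩ : ℤ_[p])
  refine ⟨j, hj, ?_⟩
  rwa [IsLocalRing.mem_maximalIdeal, PadicInt.mem_nonunits] at hmem

theorem norm_natCast_sub_natCast {i j : ℕ} (hi : i < p) (hj : j < p) (hij : i ≠ j) :
    ‖(i : ℚ_[p]) - j‖ = 1 := by
  refine le_antisymm (by exact_mod_cast norm_int_le_one (i - j)) (not_lt.1 fun hlt => hij ?_)
  have hdvd : (p : ℤ) ∣ (i : ℤ) - j := norm_intCast_lt_one_iff.1 (by exact_mod_cast hlt)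
  have := Int.eq_zero_of_dvd_of_natAbs_lt_natAbs hdvd (by omega)
  omega

theorem norm_sub_div_p_pow (x : ℚ_[p]) (j : ℕ) (n : ℕ) :
    ‖x - j / (p : ℚ_[p]) ^ n‖ = ‖(p : ℚ_[p]) ^ n * x - j‖ * (p : ℝ) ^ n := by
  have hp : (p : ℚ_[p]) ^ n ≠ 0 :=
    pow_ne_zero _ (Nat.cast_ne_zero.2 (Fact.out : p.Prime).ne_zero)
  rw [show x - j / (p : ℚ_[p]) ^ n = ((p : ℚ_[p]) ^ n * x - j) / (p : ℚ_[p]) ^ n by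
    field_simp, norm_div, norm_p_pow_inv, div_inv_eq_mul]

theorem closedBall_pow_succ_eq_biUnion (n : ℕ) :
    closedBall (0 : ℚ_[p]) ((p : ℝ) ^ (n + 1)) =
      ⋃ j ∈ Finset.range p, closedBall ((j : ℚ_[p]) / (p : ℚ_[p]) ^ (n + 1)) ((p : ℝ) ^ n) := by
  have hpn : (0 : ℝ) < (p : ℝ) ^ (n + 1) := pow_pos (zero_lt_one.trans one_lt_p) _
  ext x
  simp only [mem_iUnion, Finset.mem_range, mem_closedBall, dist_eq_norm, sub_zero, exists_prop]
  constructor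
  · intro hx
    have hz : ‖(p : ℚ_[p]) ^ (n + 1) * x‖ ≤ 1 := by
      rw [norm_mul, norm_p_pow_inv, inv_mul_le_iff₀ hpn, mul_one]; exact hx
    obtain ⟨j, hj, hlt⟩ := exists_norm_sub_natCast_lt_one hz
    refine ⟨j, hj, (norm_le_pow_iff_norm_lt_pow_succ _ n).2 ?_⟩
    simpa [norm_sub_div_p_pow] using mul_lt_mul_of_pos_right hlt hpn
  · rintro ⟨j, -, hx⟩
    have hcenter : ‖(j : ℚ_[p]) / (p : ℚ_[p]) ^ (n + 1)‖ ≤ (p : ℝ) ^ (n + 1) := by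
      rw [norm_div, norm_p_pow_inv, div_inv_eq_mul]
      exact mul_le_of_le_one_left hpn.le (IsUltrametricDist.norm_natCast_le_one ℚ_[p] j)
    calc ‖x‖ = ‖(x - j / (p : ℚ_[p]) ^ (n + 1)) + j / (p : ℚ_[p]) ^ (n + 1)‖ := by
          rw [sub_add_cancel]
      _ ≤ (p : ℝ) ^ (n + 1) := (IsUltrametricDist.norm_add_le_max _ _).trans
          (max_le (hx.trans (pow_le_pow_right₀ one_lt_p.le n.le_succ)) hcenter)

theorem norm_natCast_div_sub_natCast_div {i j : ℕ} (hi : i < p) (hj : j < p) (hij : i ≠ j)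
    (n : ℕ) : ‖(i : ℚ_[p]) / (p : ℚ_[p]) ^ n - j / (p : ℚ_[p]) ^ n‖ = (p : ℝ) ^ n := by
  rw [norm_sub_div_p_pow, mul_div_cancel₀ _ (pow_ne_zero _ (Nat.cast_ne_zero.2
    (Fact.out : p.Prime).ne_zero)), norm_natCast_sub_natCast hi hj hij, one_mul]

section Measure

variable (ν : Measure ℚ_[p]) [ν.IsAddHaarMeasure]

theorem measure_closedBall_pow_succ (n : ℕ) :
    ν (closedBall 0 ((p : ℝ) ^ (n + 1))) = p * ν (closedBall 0 ((p : ℝ) ^ n)) := by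
  rw [closedBall_pow_succ_eq_biUnion,
    measure_biUnion_finset ?_ fun _ _ => measurableSet_closedBall]
  · simp [Measure.addHaar_closedBall_center]
  intro i hi j hj hij
  refine disjoint_left.2 fun x hxi hxj => ?_
  have hdist := IsUltrametricDist.dist_triangle_max ((i : ℚ_[p]) / (p : ℚ_[p]) ^ (n + 1)) x
    (j / (p : ℚ_[p]) ^ (n + 1))
  rw [dist_eq_norm, norm_natCast_div_sub_natCast_div (Finset.mem_range.1 hi)
    (Finset.mem_range.1 hj) hij, dist_comm] at hdist
  exact (pow_lt_pow_right₀ one_lt_p n.lt_succ_self).not_ge (hdist.trans (max_le hxi hxj))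

theorem measure_closedBall_pow (n : ℕ) :
    ν (closedBall 0 ((p : ℝ) ^ n)) = p ^ n * ν (closedBall 0 1) := by
  induction n with
  | zero => simp
  | succ n ih => rw [measure_closedBall_pow_succ, ih, pow_succ', mul_assoc]

theorem measureReal_sphere_pow_succ (n : ℕ) :
    ν.real (sphere 0 ((p : ℝ) ^ (n + 1))) =
      ((p : ℝ) ^ (n + 1) - (p : ℝ) ^ n) * ν.real (closedBall 0 1) := by
  rw [sphere_pow_succ_eq_diff, measureReal_sdiff (closedBall_subset_closedBall
      (pow_le_pow_right₀ one_lt_p.le (n.le_add_right 1))) measurableSet_closedBall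
      measure_closedBall_lt_top.ne,
    measureReal_def, measureReal_def, measure_closedBall_pow, measure_closedBall_pow,
    measureReal_def, ENNReal.toReal_mul, ENNReal.toReal_mul]
  simp only [ENNReal.toReal_pow, ENNReal.toReal_natCast]
  ring

end Measure

variable (p) in
structure IsStandardAddChar (ψ : ℚ_[p] → ℂ) : Prop where
  continuous : Continuous ψ
  map_add : ∀ x y, ψ (x + y) = ψ x * ψ y
  eq_one_of_norm_le_one : ∀ x, ‖x‖ ≤ 1 → ψ x = 1
  exists_ne_one : ∃ x, ‖x‖ ≤ (p : ℝ) ∧ ψ x ≠ 1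

namespace IsStandardAddChar

variable {ψ : ℚ_[p] → ℂ}

theorem comp_mul (hψ : IsStandardAddChar p ψ) {t : ℚ_[p]} (ht : ‖t‖ = 1) :
    IsStandardAddChar p (fun y => ψ (t * y)) where
  continuous := hψ.continuous.comp (continuous_const_mul t)
  map_add x y := by simp only [mul_add, hψ.map_add]
  eq_one_of_norm_le_one x hx := hψ.eq_one_of_norm_le_one _ (by rwa [norm_mul, ht, one_mul])
  exists_ne_one := by
    obtain ⟨x, hx, hne⟩ := hψ.exists_ne_one
    have ht0 : t ≠ 0 := norm_ne_zero_iff.1 (by rw [ht]; exact one_ne_zero)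
    exact ⟨t⁻¹ * x, by rwa [norm_mul, norm_inv, ht, inv_one, one_mul],
      by rwa [mul_inv_cancel_left₀ ht0]⟩

theorem setIntegral_closedBall_one (hψ : IsStandardAddChar p ψ) (ν : Measure ℚ_[p]) :
    ∫ y in closedBall 0 1, ψ y ∂ν = ν.real (closedBall 0 1) := by
  rw [setIntegral_congr_fun measurableSet_closedBall fun y hy =>
    hψ.eq_one_of_norm_le_one y (mem_closedBall_zero_iff.1 hy), setIntegral_const,
    Complex.real_smul, mul_one]

variable (ν : Measure ℚ_[p]) [ν.IsAddHaarMeasure]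

theorem setIntegral_closedBall_pow_eq_zero (hψ : IsStandardAddChar p ψ) {n : ℕ} (hn : n ≠ 0) :
    ∫ y in closedBall 0 ((p : ℝ) ^ n), ψ y ∂ν = 0 := by
  obtain ⟨x, hx, hne⟩ := hψ.exists_ne_one
  refine setIntegral_eq_zero_of_preimage_add_eq hψ.map_add ?_ hne
  have hx' : -x ∈ closedBall 0 ((p : ℝ) ^ n) := by
    rw [mem_closedBall_zero_iff, norm_neg]
    exact hx.trans (le_self_pow₀ one_lt_p.le hn)
  rw [preimage_add_closedBall, zero_sub, IsUltrametricDist.closedBall_eq_of_mem hx']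

theorem setIntegral_sphere_pow_succ (hψ : IsStandardAddChar p ψ) (n : ℕ) :
    ∫ y in sphere 0 ((p : ℝ) ^ (n + 1)), ψ y ∂ν =
      -∫ y in closedBall 0 ((p : ℝ) ^ n), ψ y ∂ν := by
  rw [sphere_pow_succ_eq_diff, setIntegral_sdiff measurableSet_closedBall
    (hψ.continuous.continuousOn.integrableOn_compact (isCompact_closedBall 0 _))
    (closedBall_subset_closedBall (pow_le_pow_right₀ one_lt_p.le (n.le_add_right 1))),
    hψ.setIntegral_closedBall_pow_eq_zero ν n.succ_ne_zero, zero_sub]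

end IsStandardAddChar

theorem eq_haar_prod_haar (μ : Measure (ℚ_[p] × ℚ_[p])) [μ.IsAddHaarMeasure]
    (hμ : μ (closedBall 0 1) = 1) : μ = (haar p).prod (haar p) := by
  refine Measure.eq_of_isAddHaarMeasure_of_apply_eq _ _
    (TopologicalSpace.PositiveCompacts.closedUnitBall _) ?_
  change μ (closedBall 0 1) = (haar p).prod (haar p) (closedBall 0 1)
  rw [hμ, ← Prod.mk_zero_zero, ← closedBall_prod_same, Measure.prod_prod, haar_closedBall_one,
    one_mul]

theorem setIntegral_comp_linearForm {a b : ℤ} (hab : IsCoprime a b)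
    (μ : Measure (ℚ_[p] × ℚ_[p])) [μ.IsAddHaarMeasure] (hμ : μ (closedBall 0 1) = 1)
    (f : ℚ_[p] → ℂ) {r : ℝ} {S : Set ℚ_[p]} (hS : S ⊆ ball 0 r) :
    ∫ x in {x : ℚ_[p] × ℚ_[p] | ‖x‖ = r ∧ (a : ℚ_[p]) * x.1 + b * x.2 ∈ S},
        f ((a : ℚ_[p]) * x.1 + b * x.2) ∂μ =
      (∫ y in S, f y ∂haar p) * (haar p).real (sphere 0 r) := by
  obtain ⟨u, v, h⟩ := hab
  have hpres : MeasurePreserving (bezoutEquiv h) μ μ :=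
    (bezoutEquiv h).measurePreserving_of_preimage_eq μ
      (TopologicalSpace.PositiveCompacts.closedUnitBall _) (by
        ext y
        change ‖bezoutEquiv h y - 0‖ ≤ 1 ↔ ‖y - 0‖ ≤ 1
        rw [sub_zero, sub_zero, norm_bezoutEquiv])
  rw [← hpres.setIntegral_preimage_emb (bezoutEquiv h).toHomeomorph.measurableEmbedding,
    preimage_bezoutEquiv_setOf h hS, eq_haar_prod_haar μ hμ]
  simp_rw [bezoutEquiv_linearForm]
  simpa using setIntegral_prod_mul f (fun _ => (1 : ℂ)) S (sphere 0 r)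

theorem Uab_eq_setOf (a b : ℤ) (α β : ℕ) :
    Uab p a b α β = {x | ‖x‖ = (p : ℝ) ^ α ∧
      (a : ℚ_[p]) * x.1 + b * x.2 ∈ sphere 0 ((p : ℝ) ^ (α - β))} := by
  ext x
  simp [Uab, Prod.norm_def]

theorem Ua_eq_setOf (a b : ℤ) (α : ℕ) :
    Ua p a b α =
      {x | ‖x‖ = (p : ℝ) ^ α ∧ (a : ℚ_[p]) * x.1 + b * x.2 ∈ closedBall 0 1} := by
  ext x
  simp [Ua, Prod.norm_def]

theorem haar_real_sphere_pow_succ (m : ℕ) :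
    (haar p).real (sphere 0 ((p : ℝ) ^ (m + 1))) = (p : ℝ) ^ m * (p - 1) := by
  rw [measureReal_sphere_pow_succ, haar_real_closedBall_one]
  ring

variable {ψ : ℚ_[p] → ℂ} {a b : ℤ} (μ : Measure (ℚ_[p] × ℚ_[p])) [μ.IsAddHaarMeasure]

theorem setIntegral_Uab (hψ : IsStandardAddChar p ψ) (hab : IsCoprime a b)
    (hμ : μ (closedBall 0 1) = 1) {α β : ℕ} (hβ : 1 ≤ β) (hβα : β < α) :
    ∫ x in Uab p a b α β, ψ ((a : ℚ_[p]) * x.1 + b * x.2) ∂μ =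
      -((p : ℂ) ^ (α - 1) * (p - 1) *
        ∫ y in closedBall 0 ((p : ℝ) ^ (α - β - 1)), ψ y ∂haar p) := by
  obtain ⟨m, rfl⟩ : ∃ m, α = m + 1 := ⟨α - 1, by omega⟩
  obtain ⟨n, hn⟩ : ∃ n, m + 1 - β = n + 1 := ⟨m - β, by omega⟩
  have hS : sphere (0 : ℚ_[p]) ((p : ℝ) ^ (n + 1)) ⊆ ball 0 ((p : ℝ) ^ (m + 1)) :=
    sphere_subset_ball (pow_lt_pow_right₀ one_lt_p (by omega))
  rw [Uab_eq_setOf, hn, setIntegral_comp_linearForm hab μ hμ ψ hS,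
    hψ.setIntegral_sphere_pow_succ (haar p), haar_real_sphere_pow_succ, Nat.add_sub_cancel,
    Nat.add_sub_cancel]
  push_cast
  ring

theorem setIntegral_Ua (hψ : IsStandardAddChar p ψ) (hab : IsCoprime a b)
    (hμ : μ (closedBall 0 1) = 1) {α : ℕ} (hα : 1 ≤ α) :
    ∫ x in Ua p a b α, ψ ((a : ℚ_[p]) * x.1 + b * x.2) ∂μ = (p : ℂ) ^ (α - 1) * (p - 1) := by
  obtain ⟨m, rfl⟩ : ∃ m, α = m + 1 := ⟨α - 1, by omega⟩
  have hS : closedBall (0 : ℚ_[p]) 1 ⊆ ball 0 ((p : ℝ) ^ (m + 1)) :=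
    closedBall_subset_ball (one_lt_pow₀ one_lt_p m.succ_ne_zero)
  rw [Ua_eq_setOf, setIntegral_comp_linearForm hab μ hμ ψ hS, hψ.setIntegral_closedBall_one,
    haar_real_closedBall_one, haar_real_sphere_pow_succ, Nat.add_sub_cancel]
  push_cast
  ring

end Padic

theorem stmt11_general (r : ℕ) (a b : Fin r → ℤ)
    (hprim : ∀ k, Int.gcd (a k) (b k) = 1)
    (p : ℕ) [Fact p.Prime]
    (μ : Measure (ℚ_[p] × ℚ_[p])) (hμ : μ.IsAddHaarMeasure)
    (hμ1 : μ {x | ‖x.1‖ ≤ 1 ∧ ‖x.2‖ ≤ 1} = 1)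
    (ψ : ℚ_[p] → ℂ) (hψcont : Continuous ψ)
    (hψadd : ∀ x y : ℚ_[p], ψ (x + y) = ψ x * ψ y)
    (hψtriv : ∀ x : ℚ_[p], ‖x‖ ≤ 1 → ψ x = 1)
    (hψnontriv : ∃ x : ℚ_[p], ‖x‖ ≤ (p : ℝ) ∧ ψ x ≠ 1)
    (k : Fin r) (c : ℤ × ℤ)
    (hspec : c.1 * b k = c.2 * a k)
    (hcp : ¬ ((p : ℤ) ∣ c.1 ∧ (p : ℤ) ∣ c.2)) :
    (∀ α β : ℕ, 1 ≤ β → β < α →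
      (β = α - 1 →
        ∫ x in Uab p (a k) (b k) α β,
          ψ ((c.1 : ℚ_[p]) * x.1 + (c.2 : ℚ_[p]) * x.2) ∂μ =
            -((p : ℂ) ^ (α - 1) * ((p : ℂ) - 1))) ∧
      (β ≠ α - 1 →
        ∫ x in Uab p (a k) (b k) α β,
          ψ ((c.1 : ℚ_[p]) * x.1 + (c.2 : ℚ_[p]) * x.2) ∂μ = 0)) ∧
    (∀ α : ℕ, 1 ≤ α →
      ∫ x in Ua p (a k) (b k) α,
        ψ ((c.1 : ℚ_[p]) * x.1 + (c.2 : ℚ_[p]) * x.2) ∂μ =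
          (p : ℂ) ^ (α - 1) * ((p : ℂ) - 1)) := by
  have hab : IsCoprime (a k) (b k) := Int.isCoprime_iff_gcd_eq_one.2 (hprim k)
  have ⟨u, v, huv⟩ := hab
  set t : ℤ := u * c.1 + v * c.2
  have hc₁ : c.1 = t * a k := by linear_combination -c.1 * huv + v * hspec
  have hc₂ : c.2 = t * b k := by linear_combination -c.2 * huv - u * hspec
  have ht : ‖(t : ℚ_[p])‖ = 1 := le_antisymm (Padic.norm_int_le_one t) <| not_lt.1 fun hlt =>
    have hpt := Padic.norm_intCast_lt_one_iff.1 hlt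
    hcp ⟨hc₁ ▸ hpt.mul_right _, hc₂ ▸ hpt.mul_right _⟩
  have hφ : Padic.IsStandardAddChar p (fun y => ψ (t * y)) :=
    Padic.IsStandardAddChar.comp_mul ⟨hψcont, hψadd, hψtriv, hψnontriv⟩ ht
  have hμB : μ (closedBall 0 1) = 1 := by
    rw [← hμ1]; congr 1; ext x; simp [Prod.norm_def]
  have hintegrand : ∀ x : ℚ_[p] × ℚ_[p], ψ ((c.1 : ℚ_[p]) * x.1 + (c.2 : ℚ_[p]) * x.2) =
      (fun y => ψ (t * y)) ((a k : ℚ_[p]) * x.1 + b k * x.2) := fun x => by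
    simp only [hc₁, hc₂]; push_cast; ring_nf
  simp_rw [hintegrand]
  refine ⟨fun α β hβ hβα => ⟨fun hαβ => ?_, fun hαβ => ?_⟩,
    fun α hα => Padic.setIntegral_Ua μ hφ hab hμB hα⟩
  · rw [Padic.setIntegral_Uab μ hφ hab hμB hβ hβα, show α - β - 1 = 0 by omega, pow_zero,
      hφ.setIntegral_closedBall_one, Padic.haar_real_closedBall_one, Complex.ofReal_one, mul_one]
  · rw [Padic.setIntegral_Uab μ hφ hab hμB hβ hβα,
      hφ.setIntegral_closedBall_pow_eq_zero (Padic.haar p) (by omega), mul_zero, neg_zero]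

/-- Integrals of a character special for `ℓ_k` over the pieces
`U_k(α,β)` and `U_k(α)` at a prime `p` of good reduction. -/
theorem stmt11 (r : ℕ) (hr : 1 ≤ r) (a b : Fin r → ℤ)
    (hprim : ∀ k, Int.gcd (a k) (b k) = 1)
    (hnonprop : ∀ j k, j ≠ k → a j * b k - a k * b j ≠ 0)
    (p : ℕ) [Fact p.Prime]
    (hpS : ∀ j k, j ≠ k → ¬ ((p : ℤ) ∣ (a j * b k - a k * b j)))
    (μ : Measure (ℚ_[p] × ℚ_[p])) (hμ : μ.IsAddHaarMeasure)
    (hμ1 : μ {x | ‖x.1‖ ≤ 1 ∧ ‖x.2‖ ≤ 1} = 1)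
    (ψ : ℚ_[p] → ℂ) (hψcont : Continuous ψ)
    (hψadd : ∀ x y : ℚ_[p], ψ (x + y) = ψ x * ψ y)
    (hψabs : ∀ x : ℚ_[p], ‖ψ x‖ = 1)
    (hψtriv : ∀ x : ℚ_[p], ‖x‖ ≤ 1 → ψ x = 1)
    (hψnontriv : ∃ x : ℚ_[p], ‖x‖ ≤ (p : ℝ) ∧ ψ x ≠ 1)
    (k : Fin r) (c : ℤ × ℤ) (hc0 : c ≠ 0)
    (hspec : c.1 * b k = c.2 * a k)
    (hcp : ¬ ((p : ℤ) ∣ c.1 ∧ (p : ℤ) ∣ c.2)) :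
    (∀ α β : ℕ, 1 ≤ β → β < α →
      (β = α - 1 →
        ∫ x in Uab p (a k) (b k) α β,
          ψ ((c.1 : ℚ_[p]) * x.1 + (c.2 : ℚ_[p]) * x.2) ∂μ =
            -((p : ℂ) ^ (α - 1) * ((p : ℂ) - 1))) ∧
      (β ≠ α - 1 →
        ∫ x in Uab p (a k) (b k) α β,
          ψ ((c.1 : ℚ_[p]) * x.1 + (c.2 : ℚ_[p]) * x.2) ∂μ = 0)) ∧
    (∀ α : ℕ, 1 ≤ α →
      ∫ x in Ua p (a k) (b k) α,
        ψ ((c.1 : ℚ_[p]) * x.1 + (c.2 : ℚ_[p]) * x.2) ∂μ =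
          (p : ℂ) ^ (α - 1) * ((p : ℂ) - 1)) :=
  stmt11_general r a b hprim p μ hμ hμ1 ψ hψcont hψadd hψtriv hψnontriv k c hspec hcp
end
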